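/- arXiv:0906.5573 — 10 statements merged into one kernel-verified Lean document; each statement's English description precedes it below -/
import Mathlib

section
/- The generating function over pairs of nonnegative integers (λ_1, λ_2) satisfying 2λ_1 ≥ λ_2 and 2λ_2 ≥ λ_1 is ∑ x^{λ_1} y^{λ_2} = (1 + xy + x^2 y^2)/((1 - x y^2)(1 - x^2 y)), as formal power series in x and y. -/
/-! The cone `2λ₁ ≥ λ₂, 2λ₂ ≥ λ₁` is spanned by `(1,2)` and `(2,1)`, and the only lattice points
of the half-open parallelogram they span are `(0,0)`, `(1,1)`, `(2,2)`. Hence every lattice point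
of the cone is uniquely `k(1,1) + m(1,2) + n(2,1)` with `k ≤ 2`. Multiplying by
`(1 - xy²)(1 - x²y)` performs inclusion–exclusion on the coefficients along the two generators,
which leaves exactly the three monomials `1`, `xy`, `x²y²`. -/

open MvPowerSeries

/-- The generating function `∑ x^{λ₁} y^{λ₂}` over pairs `(λ₁, λ₂)` of nonnegative
integers with `2λ₁ ≥ λ₂` and `2λ₂ ≥ λ₁`, as a formal power series in `x = X 0`,
`y = X 1`: its coefficient on `x^{λ₁} y^{λ₂}` is 1 when the constraints hold, else 0. -/
noncomputable def putnamGF : MvPowerSeries (Fin 2) ℤ :=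
  fun d => if d 1 ≤ 2 * d 0 ∧ d 0 ≤ 2 * d 1 then 1 else 0

namespace MvPowerSeries

variable {σ R : Type*}

theorem coeff_mul_one_sub_monomial [Ring R] (f : MvPowerSeries σ R) (n d : σ →₀ ℕ) :
    coeff d (f * (1 - monomial n 1)) = coeff d f - if n ≤ d then coeff (d - n) f else 0 := by
  rw [mul_sub, mul_one, map_sub, coeff_mul_monomial, mul_one]

end MvPowerSeries

theorem coeff_putnamGF (d : Fin 2 →₀ ℕ) :
    coeff d putnamGF = if d 1 ≤ 2 * d 0 ∧ d 0 ≤ 2 * d 1 then 1 else 0 := rfl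

/-- `∑ x^{λ₁}y^{λ₂} = (1 + xy + x²y²) / ((1 - xy²)(1 - x²y))`,
stated with denominators cleared. -/
theorem stmt_2 :
    putnamGF * ((1 - MvPowerSeries.X 0 * MvPowerSeries.X 1 ^ 2) *
        (1 - MvPowerSeries.X 0 ^ 2 * MvPowerSeries.X 1)) =
      1 + MvPowerSeries.X 0 * MvPowerSeries.X 1 +
        (MvPowerSeries.X 0 : MvPowerSeries (Fin 2) ℤ) ^ 2 * MvPowerSeries.X 1 ^ 2 := by
  simp only [X_def, monomial_pow, one_pow, Finsupp.smul_single, smul_eq_mul, mul_one,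
    monomial_mul_monomial, ← mul_assoc]
  ext d
  simp only [coeff_mul_one_sub_monomial, map_add, coeff_one, coeff_monomial, coeff_putnamGF,
    Finsupp.le_def, Fin.forall_fin_two, Finsupp.ext_iff, Finsupp.tsub_apply, Finsupp.add_apply,
    Finsupp.single_apply, Finsupp.coe_zero, Pi.zero_apply, one_ne_zero, zero_ne_one, if_true,
    if_false, add_zero, zero_add]
  split_ifs <;> omega
end

section
/- Every pair (λ_1, λ_2) of nonnegative integers satisfying 2λ_1 ≥ λ_2 and 2λ_2 ≥ λ_1 can be written uniquely as (λ_1, λ_2) = c_1·(1,2) + c_2·(2,1) + p, where c_1, c_2 are nonnegative integers and p ∈ {(0,0), (1,1), (2,2)}. -/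
/-- Every pair `(λ₁, λ₂)` of nonnegative integers with `2λ₁ ≥ λ₂` and `2λ₂ ≥ λ₁`
is uniquely `(λ₁, λ₂) = c₁·(1,2) + c₂·(2,1) + (k,k)` with `c₁, c₂ ∈ ℤ_{≥0}` and
`k ∈ {0, 1, 2}`. -/
theorem stmt_3 (l1 l2 : ℕ) (h1 : l2 ≤ 2 * l1) (h2 : l1 ≤ 2 * l2) :
    ∃! t : ℕ × ℕ × ℕ, t.2.2 ≤ 2 ∧
      l1 = t.1 * 1 + t.2.1 * 2 + t.2.2 ∧
      l2 = t.1 * 2 + t.2.1 * 1 + t.2.2 := by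
  -- `2λ₂ - λ₁ = 3c₁ + k` and `2λ₁ - λ₂ = 3c₂ + k`: quotients and common remainder modulo 3.
  refine ⟨((2 * l2 - l1) / 3, (2 * l1 - l2) / 3, (2 * l2 - l1) % 3), ?_, ?_⟩
  · dsimp only
    omega
  · rintro ⟨c1, c2, k⟩ ⟨hk, e1, e2⟩
    dsimp only at hk e1 e2
    simp only [Prod.mk.injEq]
    omega
end

section
/- The Carlitz q-Eulerian polynomial satisfies C_n(x,q) = ((x;q)_{n+1}/(1-q)^n) · ∑_{i=0}^n binom(n,i) (-q)^i/(1 - q^i x), where (x;q)_{n+1} = ∏_{i=0}^{n}(1 - x q^i). -/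
/-- The value `π(k+1)` (1-indexed) of a permutation of `{1, …, n}` realized as a
permutation of `Fin n`, read 0-indexed: `permVal n π k = π(k+1) - 1`. -/
def permVal (n : ℕ) (π : Equiv.Perm (Fin n)) (k : ℕ) : ℕ :=
  if h : k < n then (π ⟨k, h⟩ : ℕ) else k

/-- The descent set `D_π = {j ∈ {1, …, n-1} : π(j) > π(j+1)}`. -/
def descSet (n : ℕ) (π : Equiv.Perm (Fin n)) : Finset ℕ :=
  (Finset.Icc 1 (n - 1)).filter fun j => permVal n π j < permVal n π (j - 1)

/-- The major index `maj(π) = ∑_{j ∈ D_π} j`. -/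
def maj (n : ℕ) (π : Equiv.Perm (Fin n)) : ℕ := ∑ j ∈ descSet n π, j

/-- The number of descents `des(π) = |D_π|`. -/
def des (n : ℕ) (π : Equiv.Perm (Fin n)) : ℕ := (descSet n π).card

/-!
Inserting the letter `n` into the `n + 1` slots of a permutation of `Fin n` raises `maj` by each
of `0, 1, …, n` exactly once: the last slot by `0`, the descent slots by `1, …, des` from right to
left, the other slots by `des + 1, …, n` from left to right; and it raises `des` by one exactly
when the increase of `maj` exceeds `des`. Summing geometric series, this gives
`(1 - q) C_{n+1}(x) = (1 - x q^{n+1}) C_n(x) - q (1 - x) C_n(q x)`.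
So `(1 - q)^n C_n(x)` and `(x;q)_{n+1} S_n(x)`, with `S_n(x) = ∑_i binom(n,i) (-q)^i / (1 - q^i x)`,
obey the same recursion: Pascal's rule gives `S_{n+1}(x) = S_n(x) - q S_n(q x)`, and
`(x;q)_{n+2} = (1 - x q^{n+1}) (x;q)_{n+1} = (1 - x) (q x;q)_{n+1}`.
-/

open Finset Equiv

theorem sum_card_filter_lt {α M : Type*} [LinearOrder α] [AddCommMonoid M]
    (s : Finset α) (f : ℕ → M) :
    ∑ a ∈ s, f #(s.filter (· < a)) = ∑ i ∈ range #s, f i := by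
  induction s using Finset.induction_on_max with
  | empty => simp
  | insert a s hlt ih =>
    have ha : a ∉ s := fun h => lt_irrefl a (hlt a h)
    have hfilter_a : (insert a s).filter (· < a) = s := by
      rw [filter_insert, if_neg (lt_irrefl a), filter_true_of_mem hlt]
    have hfilter_b : ∀ b ∈ s, (insert a s).filter (· < b) = s.filter (· < b) := fun b hb => by
      rw [filter_insert, if_neg (hlt b hb).not_gt]
    rw [sum_insert ha, hfilter_a, sum_congr rfl fun b hb => by rw [hfilter_b b hb], ih,
      card_insert_of_notMem ha, sum_range_succ, add_comm]

theorem sum_card_filter_gt {α M : Type*} [LinearOrder α] [AddCommMonoid M]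
    (s : Finset α) (f : ℕ → M) :
    ∑ a ∈ s, f #(s.filter (a < ·)) = ∑ i ∈ range #s, f i :=
  sum_card_filter_lt (α := αᵒᵈ) s f

theorem prod_eq_prod_filter_lt_mul_prod_filter_gt {α M : Type*} [LinearOrder α] [CommMonoid M]
    (s : Finset α) (a : α) (f : α → M) :
    ∏ j ∈ s, f j =
      (∏ j ∈ s.filter (· < a), f j) * (if a ∈ s then f a else 1) * ∏ j ∈ s.filter (a < ·), f j := by
  have h₁ : s.filter (fun j => ¬ j < a ∧ j = a) = s.filter (· = a) :=
    filter_congr fun j _ => by constructor <;> [exact And.right; exact fun h => ⟨h.not_lt, h⟩]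
  have h₂ : s.filter (fun j => ¬ j < a ∧ ¬ j = a) = s.filter (a < ·) :=
    filter_congr fun j _ => by rw [not_lt, lt_iff_le_and_ne, ne_comm]
  rw [← prod_filter_mul_prod_filter_not s (· < a), mul_assoc,
    ← prod_filter_mul_prod_filter_not (s.filter fun j => ¬ j < a) (· = a), filter_filter,
    filter_filter, h₁, h₂, filter_eq']
  split_ifs <;> simp

theorem add_card_filter_gt_eq_card_add_card_filter_lt {s : Finset ℕ} {n p : ℕ}
    (hp : p ∈ range n \ s) :
    p + #(s.filter (p < ·)) = #s + #((range n \ s).filter (· < p)) := by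
  obtain ⟨hpn, hps⟩ := mem_sdiff.1 hp
  rw [mem_range] at hpn
  have hs : #(s.filter (· < p)) + #(s.filter (p < ·)) = #s := by
    rw [← card_filter_add_card_filter_not (s := s) (· < p)]
    congr 2
    exact filter_congr fun j hj => by
      rw [not_lt, le_iff_eq_or_lt, or_iff_right (by rintro rfl; exact hps hj)]
  have hrange : #(s.filter (· < p)) + #((range n \ s).filter (· < p)) = p := by
    have hin : (range p).filter (· ∈ s) = s.filter (· < p) := by
      ext j; simp [and_comm]
    have hout : (range p).filter (· ∉ s) = (range n \ s).filter (· < p) := by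
      ext j
      simp only [mem_filter, mem_range, mem_sdiff]
      exact ⟨fun ⟨h, hj⟩ => ⟨⟨by omega, hj⟩, h⟩, fun ⟨⟨_, hj⟩, h⟩ => ⟨h, hj⟩⟩
    rw [← hin, ← hout, card_filter_add_card_filter_not, card_range]
  omega

/-- The word of `π` with the letter `n` inserted at position `p`. -/
def insertMax {n : ℕ} (π : Perm (Fin n)) (p : Fin (n + 1)) : Perm (Fin (n + 1)) :=
  (finSuccEquiv' p).trans ((Equiv.optionCongr π).trans (finSuccEquiv' (Fin.last n)).symm)

section insertMax

variable {n : ℕ} (π : Perm (Fin n)) (p : Fin (n + 1))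

@[simp]
lemma insertMax_apply_self : insertMax π p p = Fin.last n := by
  simp [insertMax]

@[simp]
lemma insertMax_apply_succAbove (j : Fin n) :
    insertMax π p (p.succAbove j) = (π j).castSucc := by
  simp [insertMax, Fin.succAbove_last]

lemma insertMax_bijective :
    Function.Bijective (fun πp : Perm (Fin n) × Fin (n + 1) => insertMax πp.1 πp.2) := by
  rw [Fintype.bijective_iff_injective_and_card]
  refine ⟨?_, by simp [Fintype.card_perm, Nat.factorial_succ, mul_comm]⟩
  rintro ⟨π₁, p₁⟩ ⟨π₂, p₂⟩ h
  dsimp only at h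
  obtain rfl : p₁ = p₂ := by
    by_contra hne
    obtain ⟨j, hj⟩ := Fin.exists_succAbove_eq hne
    have := insertMax_apply_succAbove π₂ p₂ j
    rw [hj, ← h, insertMax_apply_self] at this
    exact (Fin.castSucc_lt_last (π₂ j)).ne' this
  obtain rfl : π₁ = π₂ := by
    ext j
    have := insertMax_apply_succAbove π₁ p₁ j
    rw [h, insertMax_apply_succAbove] at this
    exact congrArg Fin.val (Fin.castSucc_injective n this).symm
  rfl

lemma permVal_lt {i : ℕ} (hi : i < n) : permVal n π i < n := by
  simp [permVal, hi]

lemma permVal_insertMax {i : ℕ} (hi : i ≤ n) :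
    permVal (n + 1) (insertMax π p) i =
      if i < p then permVal n π i else if i = p then n else permVal n π (i - 1) := by
  have hi' : i < n + 1 := Nat.lt_succ_of_le hi
  rw [permVal, dif_pos hi']
  split_ifs with hlt heq
  · have hin : i < n := lt_of_lt_of_le hlt (Nat.lt_succ_iff.mp p.isLt)
    have : (⟨i, hi'⟩ : Fin (n + 1)) = p.succAbove ⟨i, hin⟩ :=
      (Fin.succAbove_of_castSucc_lt p ⟨i, hin⟩ hlt).symm
    simp [this, permVal, hin]
  · have : (⟨i, hi'⟩ : Fin (n + 1)) = p := Fin.ext heq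
    simp [this]
  · have hin : i - 1 < n := by omega
    have : (⟨i, hi'⟩ : Fin (n + 1)) = p.succAbove ⟨i - 1, hin⟩ := by
      rw [Fin.succAbove_of_le_castSucc _ _ (by simp [Fin.le_def]; omega)]
      ext; simp; omega
    simp [this, permVal, hin]

lemma mem_descSet {j : ℕ} :
    j ∈ descSet n π ↔ 1 ≤ j ∧ j ≤ n - 1 ∧ permVal n π j < permVal n π (j - 1) := by
  simp [descSet, and_assoc]

lemma des_le : des n π ≤ n :=
  (card_filter_le _ _).trans (by simp)

lemma descSet_insertMax :
    descSet (n + 1) (insertMax π p) =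
      (descSet n π).filter (· < (p : ℕ)) ∪ (if (p : ℕ) < n then {(p : ℕ) + 1} else ∅) ∪
        ((descSet n π).filter ((p : ℕ) < ·)).image (· + 1) := by
  have hp : (p : ℕ) ≤ n := Nat.lt_succ_iff.mp p.isLt
  ext j
  simp only [mem_union, mem_filter, mem_image, mem_descSet, apply_ite (j ∈ ·),
    mem_singleton, notMem_empty]
  constructor
  · rintro ⟨h1, h2, hdesc⟩
    rw [permVal_insertMax π p (by omega), permVal_insertMax π p (by omega)] at hdesc
    obtain hj | hj | hj | hj : j < p ∨ j = p ∨ j = p + 1 ∨ p + 1 < j := by omega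
    · rw [if_pos hj, if_pos (by omega)] at hdesc
      exact .inl (.inl ⟨⟨h1, by omega, hdesc⟩, hj⟩)
    · rw [if_neg (by omega), if_pos hj, if_pos (by omega)] at hdesc
      exact absurd hdesc (permVal_lt π (by omega)).not_gt
    · exact .inl (.inr (by rw [if_pos (by omega)]; exact hj))
    · rw [if_neg (by omega), if_neg (by omega), if_neg (by omega), if_neg (by omega)] at hdesc
      refine .inr ⟨j - 1, ⟨⟨by omega, by omega, ?_⟩, by omega⟩, by omega⟩
      rwa [show j - 1 - 1 = j - 2 by omega]
  · rintro ((⟨⟨h1, h2, hdesc⟩, hj⟩ | hj) | ⟨j, ⟨⟨h1, h2, hdesc⟩, hj⟩, rfl⟩)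
    · refine ⟨h1, by omega, ?_⟩
      rwa [permVal_insertMax π p (by omega), permVal_insertMax π p (by omega), if_pos hj,
        if_pos (by omega)]
    · split_ifs at hj with hpn
      subst hj
      refine ⟨by omega, by omega, ?_⟩
      rw [permVal_insertMax π p (by omega), permVal_insertMax π p (by omega), if_neg (by omega),
        if_neg (by omega), if_neg (by omega), if_pos (by omega)]
      exact permVal_lt π (by omega)
    · refine ⟨by omega, by omega, ?_⟩
      rwa [permVal_insertMax π p (by omega), permVal_insertMax π p (by omega), if_neg (by omega),
        if_neg (by omega), if_neg (by omega), if_neg (by omega), Nat.add_sub_cancel]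

lemma pow_des_mul_pow_maj {M : Type*} [CommMonoid M] (x q : M) :
    x ^ des n π * q ^ maj n π = ∏ j ∈ descSet n π, x * q ^ j := by
  rw [prod_mul_distrib, prod_const, prod_pow_eq_pow_sum, des, maj]

lemma prod_descSet_insertMax {M : Type*} [CommMonoid M] (x q : M) :
    ∏ j ∈ descSet (n + 1) (insertMax π p), x * q ^ j =
      (∏ j ∈ descSet n π, x * q ^ j) *
        if (p : ℕ) = n then 1
        else if (p : ℕ) ∈ descSet n π then q ^ (#((descSet n π).filter ((p : ℕ) < ·)) + 1)
        else x * q ^ ((p : ℕ) + #((descSet n π).filter ((p : ℕ) < ·)) + 1) := by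
  set D := descSet n π
  have hD : ∀ j ∈ D, 1 ≤ j ∧ j ≤ n - 1 := fun j hj => by
    have := (mem_descSet π).1 hj; omega
  have hp : (p : ℕ) ≤ n := Nat.lt_succ_iff.mp p.isLt
  have hdisj₁ : Disjoint (D.filter (· < (p : ℕ))) (if (p : ℕ) < n then {(p : ℕ) + 1} else ∅) := by
    split_ifs <;> simp
  have hdisj₂ : Disjoint (D.filter (· < (p : ℕ)) ∪ (if (p : ℕ) < n then {(p : ℕ) + 1} else ∅))
      ((D.filter ((p : ℕ) < ·)).image (· + 1)) := by
    rw [disjoint_left]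
    rintro _ hj hj'
    obtain ⟨a, ha, rfl⟩ := mem_image.1 hj'
    rw [mem_filter] at ha
    rcases mem_union.1 hj with hj | hj
    · exact absurd (mem_filter.1 hj).2 (by omega)
    · split_ifs at hj <;> simp at hj; omega
  have hshift : ∏ j ∈ D.filter ((p : ℕ) < ·), x * q ^ (j + 1) =
      q ^ #(D.filter ((p : ℕ) < ·)) * ∏ j ∈ D.filter ((p : ℕ) < ·), x * q ^ j := by
    rw [← prod_const, ← prod_mul_distrib]
    exact prod_congr rfl fun j _ => by rw [pow_succ, mul_comm q, mul_assoc]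
  rw [descSet_insertMax, prod_union hdisj₂, prod_union hdisj₁,
    prod_image fun a _ b _ h => by simpa using h, hshift,
    prod_eq_prod_filter_lt_mul_prod_filter_gt D p]
  by_cases hpn : (p : ℕ) = n
  · have hgt : D.filter ((p : ℕ) < ·) = ∅ := filter_eq_empty_iff.2 fun j hj => by
      have := hD j hj; omega
    have hpD : (p : ℕ) ∉ D := fun h => by have := hD _ h; omega
    simp only [hpn] at hgt hpD ⊢
    simp [hgt, hpD]
  · split_ifs <;> simp only [prod_singleton, prod_empty, pow_add, pow_one, mul_one] <;>
      first | omega | ac_rfl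

lemma sum_prod_descSet_insertMax {R : Type*} [CommSemiring R] (x q : R) :
    ∑ p : Fin (n + 1), ∏ j ∈ descSet (n + 1) (insertMax π p), x * q ^ j =
      (∏ j ∈ descSet n π, x * q ^ j) *
        (∑ i ∈ range (des n π + 1), q ^ i +
          x * q ^ (des n π + 1) * ∑ i ∈ range (n - des n π), q ^ i) := by
  rw [des]
  set D := descSet n π
  have hD : D ⊆ range n := fun j hj => by
    have := (mem_descSet π).1 hj; rw [mem_range]; omega
  simp_rw [prod_descSet_insertMax, ← mul_sum]
  congr 1
  rw [Fin.sum_univ_eq_sum_range (fun p => if p = n then 1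
      else if p ∈ D then q ^ (#(D.filter (p < ·)) + 1)
      else x * q ^ (p + #(D.filter (p < ·)) + 1)) (n + 1),
    sum_range_succ, if_pos rfl,
    sum_congr rfl fun p hp => if_neg (mem_range.1 hp).ne,
    ← sum_sdiff hD, sum_congr rfl fun p hp => if_pos hp,
    sum_card_filter_gt D fun k => q ^ (k + 1),
    sum_congr rfl fun p hp => by rw [if_neg (mem_sdiff.1 hp).2,
      add_card_filter_gt_eq_card_add_card_filter_lt hp],
    sum_card_filter_lt (range n \ D) fun k => x * q ^ (#D + k + 1),
    card_sdiff_of_subset hD, card_range, sum_range_succ', mul_sum]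
  simp only [pow_zero, pow_add, pow_one, mul_right_comm _ _ q, ← mul_assoc x]
  ring

end insertMax

def carlitzEulerian {R : Type*} [CommSemiring R] (n : ℕ) (x q : R) : R :=
  ∑ π : Perm (Fin n), x ^ des n π * q ^ maj n π

@[simp]
lemma carlitzEulerian_zero {R : Type*} [CommSemiring R] (x q : R) : carlitzEulerian 0 x q = 1 := by
  simp [carlitzEulerian, des, maj, descSet]

lemma carlitzEulerian_succ_eq_sum_insertMax {R : Type*} [CommSemiring R] (n : ℕ) (x q : R) :
    carlitzEulerian (n + 1) x q =
      ∑ π : Perm (Fin n), ∑ p : Fin (n + 1), ∏ j ∈ descSet (n + 1) (insertMax π p), x * q ^ j := by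
  rw [carlitzEulerian, ← Fintype.sum_prod_type',
    ← Fintype.sum_bijective _ (insertMax_bijective (n := n)) _ _ fun _ => rfl]
  simp_rw [pow_des_mul_pow_maj]

lemma one_sub_mul_carlitzEulerian_succ {R : Type*} [CommRing R] (n : ℕ) (x q : R) :
    (1 - q) * carlitzEulerian (n + 1) x q =
      (1 - x * q ^ (n + 1)) * carlitzEulerian n x q -
        q * (1 - x) * carlitzEulerian n (q * x) q := by
  rw [carlitzEulerian_succ_eq_sum_insertMax, carlitzEulerian, carlitzEulerian, mul_sum, mul_sum,
    mul_sum, ← sum_sub_distrib]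
  refine sum_congr rfl fun π _ => ?_
  obtain ⟨e, he⟩ : ∃ e, n = des n π + e := ⟨n - des n π, by have := des_le π; omega⟩
  rw [sum_prod_descSet_insertMax, ← pow_des_mul_pow_maj, mul_pow,
    show n - des n π = e by omega, show n + 1 = des n π + 1 + e by omega]
  linear_combination (x ^ des n π * q ^ maj n π) * mul_neg_geom_sum q (des n π + 1) +
    (x ^ des n π * q ^ maj n π) * x * q ^ (des n π + 1) * mul_neg_geom_sum q e

lemma sum_choose_succ_mul_neg_pow_div {K : Type*} [Field K] (n : ℕ) (x q : K) :
    ∑ i ∈ range (n + 2), ((n + 1).choose i : K) * (-q) ^ i / (1 - q ^ i * x) =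
      ∑ i ∈ range (n + 1), (n.choose i : K) * (-q) ^ i / (1 - q ^ i * x) -
        q * ∑ i ∈ range (n + 1), (n.choose i : K) * (-q) ^ i / (1 - q ^ i * (q * x)) := by
  simp only [mul_div_assoc]
  rw [sum_choose_succ_mul (fun i _ => (-q) ^ i / (1 - q ^ i * x)) n, sub_eq_add_neg, mul_sum,
    ← sum_neg_distrib]
  congr 1
  exact sum_congr rfl fun i _ => by ring

theorem one_sub_pow_mul_carlitzEulerian {K : Type*} [Field K] (n : ℕ) {x q : K}
    (hx : ∀ i : ℕ, 1 - q ^ i * x ≠ 0) :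
    (1 - q) ^ n * carlitzEulerian n x q =
      (∏ i ∈ range (n + 1), (1 - x * q ^ i)) *
        ∑ i ∈ range (n + 1), (n.choose i : K) * (-q) ^ i / (1 - q ^ i * x) := by
  induction n generalizing x with
  | zero =>
    have hx₀ : 1 - x ≠ 0 := by simpa using hx 0
    simp [hx₀]
  | succ n ih =>
    have hqx : ∀ i : ℕ, 1 - q ^ i * (q * x) ≠ 0 := fun i => by
      rw [← mul_assoc, ← pow_succ]; exact hx (i + 1)
    have hP₁ : ∏ i ∈ range (n + 2), (1 - x * q ^ i) =
        (∏ i ∈ range (n + 1), (1 - x * q ^ i)) * (1 - x * q ^ (n + 1)) := prod_range_succ _ _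
    have hP₂ : ∏ i ∈ range (n + 2), (1 - x * q ^ i) =
        (∏ i ∈ range (n + 1), (1 - q * x * q ^ i)) * (1 - x) := by
      rw [prod_range_succ', pow_zero, mul_one]
      congr 1
      exact prod_congr rfl fun i _ => by ring
    calc (1 - q) ^ (n + 1) * carlitzEulerian (n + 1) x q
        = (1 - x * q ^ (n + 1)) * ((1 - q) ^ n * carlitzEulerian n x q) -
            q * (1 - x) * ((1 - q) ^ n * carlitzEulerian n (q * x) q) := by
          rw [pow_succ, mul_assoc, one_sub_mul_carlitzEulerian_succ]; ring
      _ = (∏ i ∈ range (n + 2), (1 - x * q ^ i)) *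
              ∑ i ∈ range (n + 1), (n.choose i : K) * (-q) ^ i / (1 - q ^ i * x) -
            q * ((∏ i ∈ range (n + 2), (1 - x * q ^ i)) *
              ∑ i ∈ range (n + 1), (n.choose i : K) * (-q) ^ i / (1 - q ^ i * (q * x))) := by
          rw [ih hx, ih hqx]
          nth_rw 1 [hP₁]
          rw [hP₂]
          ring
      _ = _ := by rw [sum_choose_succ_mul_neg_pow_div]; ring

/-- `C_n(x,q) = ((x;q)_{n+1} / (1-q)^n) · ∑_{i=0}^n C(n,i) (-q)^i / (1 - q^i x)`,
as rational functions in `x` and `q` (in the fraction field of `ℤ[x,q]`). -/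
theorem stmt_6 (n : ℕ)
    (x q : FractionRing (MvPolynomial (Fin 2) ℤ))
    (hx : x = algebraMap (MvPolynomial (Fin 2) ℤ) _ (MvPolynomial.X 0))
    (hq : q = algebraMap (MvPolynomial (Fin 2) ℤ) _ (MvPolynomial.X 1)) :
    ∑ π : Equiv.Perm (Fin n), x ^ des n π * q ^ maj n π =
      (∏ i ∈ Finset.range (n + 1), (1 - x * q ^ i)) / (1 - q) ^ n *
        ∑ i ∈ Finset.range (n + 1), (n.choose i : FractionRing (MvPolynomial (Fin 2) ℤ)) *
          (-q) ^ i / (1 - q ^ i * x) := by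
  have hne : ∀ f : MvPolynomial (Fin 2) ℤ, MvPolynomial.constantCoeff f = 1 →
      algebraMap _ (FractionRing (MvPolynomial (Fin 2) ℤ)) f ≠ 0 := fun f hf h => by
    rw [IsFractionRing.to_map_eq_zero_iff] at h
    simp [h] at hf
  have hden : ∀ i : ℕ, 1 - q ^ i * x ≠ 0 := fun i => by
    convert hne (1 - MvPolynomial.X 1 ^ i * MvPolynomial.X 0) (by simp) using 1
    simp [hx, hq]
  have hq₁ : 1 - q ≠ 0 := by
    convert hne (1 - MvPolynomial.X 1) (by simp) using 1
    simp [hq]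
  rw [div_mul_eq_mul_div, eq_div_iff (pow_ne_zero n hq₁), mul_comm,
    ← one_sub_pow_mul_carlitzEulerian n hden, carlitzEulerian]
end

section
/- Substituting x = q^{-n} in the Carlitz q-Eulerian polynomial gives C_n(q^{-n}, q) = (-q)^n (q^{-n}; q)_n / (1-q)^n, where (a;q)_n = ∏_{i=0}^{n-1}(1 - a q^i). -/
open Finset

namespace CarlitzEulerian

section Words

variable {n i : ℕ} {w : ℕ → ℕ}

def wordDescents (n : ℕ) (w : ℕ → ℕ) : Finset ℕ :=
  {j ∈ Icc 1 (n - 1) | w j < w (j - 1)}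

lemma descSet_eq_wordDescents (n : ℕ) (π : Equiv.Perm (Fin n)) :
    descSet n π = wordDescents n (permVal n π) := rfl

lemma mem_wordDescents {j : ℕ} :
    j ∈ wordDescents n w ↔ (1 ≤ j ∧ j ≤ n - 1) ∧ w j < w (j - 1) := by
  simp [wordDescents]

lemma wordDescents_subset : wordDescents n w ⊆ Icc 1 (n - 1) := filter_subset _ _

lemma wordDescents_congr {w' : ℕ → ℕ} (h : ∀ k < n, w k = w' k) :
    wordDescents n w = wordDescents n w' := by
  ext j
  simp only [mem_wordDescents]
  constructor <;> rintro ⟨hj, hd⟩ <;> refine ⟨hj, ?_⟩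
  · rwa [← h j (by omega), ← h (j - 1) (by omega)]
  · rwa [h j (by omega), h (j - 1) (by omega)]

def insertAt (t : ℕ) (w : ℕ → ℕ) (i : ℕ) : ℕ → ℕ := fun k =>
  if k < i then w k else if k = i then t else w (k - 1)

lemma insertAt_of_lt {t k : ℕ} (h : k < i) : insertAt t w i k = w k := if_pos h

lemma insertAt_self {t : ℕ} : insertAt t w i i = t := by simp [insertAt]

lemma insertAt_of_gt {t k : ℕ} (h : i < k) : insertAt t w i k = w (k - 1) := by
  simp only [insertAt]; rw [if_neg (by omega), if_neg (by omega)]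

lemma wordDescents_insertAt_of_lt (hw : ∀ k < n, w k < n) (hi : i < n) :
    wordDescents (n + 1) (insertAt n w i) =
      {j ∈ wordDescents n w | j < i} ∪
        insert (i + 1) ({j ∈ wordDescents n w | i < j}.map (addRightEmbedding 1)) := by
  ext j
  simp only [mem_union, mem_filter, mem_insert, mem_map, addRightEmbedding_apply,
    mem_wordDescents]
  constructor
  · rintro ⟨⟨hj1, hj2⟩, hd⟩
    rcases lt_trichotomy j i with h | rfl | h
    · rw [insertAt_of_lt h, insertAt_of_lt (by omega)] at hd
      exact .inl ⟨⟨⟨hj1, by omega⟩, hd⟩, h⟩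
    · rw [insertAt_self, insertAt_of_lt (by omega)] at hd
      exact absurd (hw (j - 1) (by omega)) (by omega)
    · rcases (Nat.succ_le_of_lt h).eq_or_lt with h' | h'
      · exact .inr (.inl (by omega))
      · rw [insertAt_of_gt h, insertAt_of_gt (by omega), Nat.sub_sub] at hd
        exact .inr (.inr ⟨j - 1, ⟨⟨⟨by omega, by omega⟩, hd⟩, by omega⟩, by omega⟩)
  · rintro (⟨⟨⟨hj1, hj2⟩, hd⟩, hlt⟩ | rfl | ⟨m, ⟨⟨⟨hm1, hm2⟩, hd⟩, hlt⟩, rfl⟩)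
    · refine ⟨⟨hj1, by omega⟩, ?_⟩
      rwa [insertAt_of_lt hlt, insertAt_of_lt (by omega)]
    · refine ⟨⟨by omega, by omega⟩, ?_⟩
      rw [insertAt_of_gt (by omega), Nat.add_sub_cancel, insertAt_self]
      exact hw i hi
    · refine ⟨⟨by omega, by omega⟩, ?_⟩
      rwa [insertAt_of_gt (by omega), insertAt_of_gt (by omega), Nat.add_sub_cancel]

lemma wordDescents_insertAt_self (hw : ∀ k < n, w k < n) :
    wordDescents (n + 1) (insertAt n w n) = wordDescents n w := by
  ext j
  simp only [mem_wordDescents]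
  constructor
  · rintro ⟨⟨hj1, hj2⟩, hd⟩
    rcases (show j ≤ n by omega).eq_or_lt with rfl | h
    · rw [insertAt_self, insertAt_of_lt (by omega)] at hd
      exact absurd (hw (j - 1) (by omega)) (by omega)
    · rw [insertAt_of_lt h, insertAt_of_lt (by omega)] at hd
      exact ⟨⟨hj1, by omega⟩, hd⟩
  · rintro ⟨⟨hj1, hj2⟩, hd⟩
    refine ⟨⟨hj1, by omega⟩, ?_⟩
    rwa [insertAt_of_lt (by omega), insertAt_of_lt (by omega)]

end Words

section InsertionGain

variable {D : Finset ℕ} {n i i' : ℕ}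

/-- The increase of the major index when the letter `n` is inserted at position `i` of a word
of length `n` with descent set `D`. -/
def insertionGain (D : Finset ℕ) (n i : ℕ) : ℕ :=
  if i = n then 0 else if i ∈ D then #{j ∈ D | i < j} + 1 else i + #{j ∈ D | i < j} + 1

lemma sum_wordDescents_insertAt {w : ℕ → ℕ} (hw : ∀ k < n, w k < n) (hi : i ≤ n) :
    ∑ j ∈ wordDescents (n + 1) (insertAt n w i), j =
      ∑ j ∈ wordDescents n w, j + insertionGain (wordDescents n w) n i := by
  set D := wordDescents n w
  rcases hi.eq_or_lt with rfl | hi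
  · simp [wordDescents_insertAt_self hw, insertionGain, D]
  have hdisj : Disjoint {j ∈ D | j < i}
      (insert (i + 1) ({j ∈ D | i < j}.map (addRightEmbedding 1))) := by
    simp only [disjoint_left, mem_filter, mem_insert, mem_map, addRightEmbedding_apply]
    rintro j ⟨-, hj⟩ (rfl | ⟨m, ⟨-, hm⟩, rfl⟩) <;> omega
  have hnotMem : i + 1 ∉ {j ∈ D | i < j}.map (addRightEmbedding 1) := by
    simp only [mem_map, mem_filter, addRightEmbedding_apply]
    rintro ⟨m, ⟨-, hm⟩, hmi⟩
    omega
  have herase : ∑ j ∈ D.erase i, j = ∑ j ∈ D with j < i, j + ∑ j ∈ D with i < j, j := by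
    rw [← sum_filter_add_sum_filter_not (D.erase i) (· < i)]
    congr 1 <;> congr 1 <;> ext j <;> simp only [mem_filter, mem_erase] <;> grind
  rw [wordDescents_insertAt_of_lt hw hi, sum_union hdisj, sum_insert hnotMem, sum_map]
  simp only [addRightEmbedding_apply, sum_add_distrib, sum_const, smul_eq_mul, mul_one]
  by_cases hiD : i ∈ D
  · rw [← add_sum_erase D _ hiD, herase, insertionGain, if_neg hi.ne, if_pos hiD]
    ring
  · rw [erase_eq_of_notMem hiD] at herase
    rw [herase, insertionGain, if_neg hi.ne, if_neg hiD]
    ring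

lemma insertionGain_self : insertionGain D n n = 0 := if_pos rfl

lemma insertionGain_of_mem (hD : D ⊆ Icc 1 (n - 1)) (hi : i ∈ D) :
    insertionGain D n i = #{j ∈ D | i < j} + 1 := by
  have := mem_Icc.1 (hD hi)
  rw [insertionGain, if_neg (by omega), if_pos hi]

lemma insertionGain_of_notMem (hi : i ∉ D) (hin : i ≠ n) :
    insertionGain D n i = i + #{j ∈ D | i < j} + 1 := by
  rw [insertionGain, if_neg hin, if_neg hi]

lemma card_filter_lt_le (hD : D ⊆ Icc 1 (n - 1)) : #{j ∈ D | i < j} ≤ n - 1 - i := by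
  calc #{j ∈ D | i < j} ≤ #(Ioc i (n - 1)) := card_le_card fun j hj => by
        have := hD (mem_filter.1 hj).1
        simp only [mem_filter, mem_Icc, mem_Ioc] at hj this ⊢
        omega
    _ = n - 1 - i := Nat.card_Ioc _ _

lemma card_le_add_card_filter_lt (hD : D ⊆ Icc 1 (n - 1)) : #D ≤ i + #{j ∈ D | i < j} := by
  have hle : #{j ∈ D | ¬ i < j} ≤ #(Icc 1 i) := card_le_card fun j hj => by
    have := hD (mem_filter.1 hj).1
    simp only [mem_filter, mem_Icc] at hj this ⊢
    omega
  have := card_filter_add_card_filter_not (s := D) (p := (i < ·))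
  rw [Nat.card_Icc] at hle
  omega

lemma card_filter_lt_lt_card (hi : i ∈ D) : #{j ∈ D | i < j} < #D :=
  card_lt_card <| filter_ssubset.2 ⟨i, hi, lt_irrefl i⟩

lemma card_filter_lt_lt_of_mem (h : i < i') (hi' : i' ∈ D) :
    #{j ∈ D | i' < j} < #{j ∈ D | i < j} := by
  refine card_lt_card ⟨monotone_filter_right D fun j _ hj => h.trans hj, fun hsub => ?_⟩
  exact lt_irrefl i' (mem_filter.1 (hsub (mem_filter.2 ⟨hi', h⟩))).2

lemma card_filter_lt_le_of_notMem (h : i < i') (hi' : i' ∉ D) :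
    #{j ∈ D | i < j} ≤ #{j ∈ D | i' < j} + (i' - i - 1) := by
  calc #{j ∈ D | i < j} ≤ #({j ∈ D | i' < j} ∪ Ioo i i') := card_le_card fun j hj => by
        simp only [mem_filter, mem_union, mem_Ioo] at hj ⊢
        rcases lt_trichotomy j i' with h | rfl | h
        · exact .inr ⟨hj.2, h⟩
        · exact absurd hj.1 hi'
        · exact .inl ⟨hj.1, h⟩
    _ ≤ _ := (card_union_le _ _).trans (by rw [Nat.card_Ioo])

lemma insertionGain_lt (hD : D ⊆ Icc 1 (n - 1)) (hi : i ≤ n) : insertionGain D n i < n + 1 := by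
  have hcard : #D ≤ n - 1 := (card_le_card hD).trans (by rw [Nat.card_Icc]; omega)
  rcases eq_or_ne i n with rfl | hin
  · rw [insertionGain_self]; omega
  by_cases hiD : i ∈ D
  · rw [insertionGain_of_mem hD hiD]
    have := card_filter_lt_lt_card hiD
    omega
  · rw [insertionGain_of_notMem hiD hin]
    have := card_filter_lt_le (i := i) hD
    omega

/-- Descent positions get the gains `1, …, #D` (decreasingly), the other positions below `n`
get `#D + 1, …, n` (increasingly), and position `n` gets `0`. -/
lemma insertionGain_ne_of_lt (hD : D ⊆ Icc 1 (n - 1)) (h : i < i') (hi' : i' ≤ n) :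
    insertionGain D n i ≠ insertionGain D n i' := by
  by_cases hiD : i ∈ D
  · rw [insertionGain_of_mem hD hiD]
    have := card_filter_lt_lt_card hiD
    by_cases hi'D : i' ∈ D
    · rw [insertionGain_of_mem hD hi'D]
      have := card_filter_lt_lt_of_mem h hi'D
      omega
    rcases eq_or_ne i' n with rfl | hi'n
    · rw [insertionGain_self]; omega
    · rw [insertionGain_of_notMem hi'D hi'n]
      have := card_le_add_card_filter_lt (i := i') hD
      omega
  · rw [insertionGain_of_notMem hiD (by omega)]
    have := card_le_add_card_filter_lt (i := i) hD
    by_cases hi'D : i' ∈ D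
    · rw [insertionGain_of_mem hD hi'D]
      have := card_filter_lt_lt_card hi'D
      omega
    rcases eq_or_ne i' n with rfl | hi'n
    · rw [insertionGain_self]; omega
    · rw [insertionGain_of_notMem hi'D hi'n]
      have := card_filter_lt_le_of_notMem h hi'D
      omega

lemma sum_pow_insertionGain {R : Type*} [CommSemiring R] (q : R) (hD : D ⊆ Icc 1 (n - 1)) :
    ∑ i ∈ range (n + 1), q ^ insertionGain D n i = ∑ k ∈ range (n + 1), q ^ k := by
  have hmaps : Set.MapsTo (insertionGain D n) (range (n + 1)) (range (n + 1)) := fun i hi =>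
    mem_range.2 (insertionGain_lt hD (Nat.lt_succ_iff.1 (mem_range.1 hi)))
  have hinj : Set.InjOn (insertionGain D n) (range (n + 1)) := fun a ha b hb hab => by
    simp only [coe_range, Set.mem_Iio] at ha hb
    by_contra hne
    rcases Nat.lt_or_gt_of_ne hne with h | h
    · exact insertionGain_ne_of_lt hD h (by omega) hab
    · exact insertionGain_ne_of_lt hD h (by omega) hab.symm
  exact sum_nbij _ hmaps hinj (surjOn_of_injOn_of_card_le _ hmaps hinj le_rfl) fun _ _ => rfl

end InsertionGain


section Permutations

open Equiv

variable {n : ℕ}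

/-- The permutation of `Fin (n + 1)` taking the value `n` at position `i` whose remaining values
are in the relative order of `σ`. -/
def insertMax (σ : Perm (Fin n)) (i : Fin (n + 1)) : Perm (Fin (n + 1)) :=
  (finSuccEquiv' i).trans ((optionCongr σ).trans (finSuccEquiv' (Fin.last n)).symm)

lemma insertMax_apply_self (σ : Perm (Fin n)) (i : Fin (n + 1)) :
    insertMax σ i i = Fin.last n := by
  simp [insertMax]

lemma insertMax_apply_succAbove (σ : Perm (Fin n)) (i : Fin (n + 1)) (j : Fin n) :
    insertMax σ i (i.succAbove j) = (σ j).castSucc := by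
  simp [insertMax]

lemma permVal_lt (σ : Perm (Fin n)) {k : ℕ} (hk : k < n) : permVal n σ k < n := by
  rw [permVal, dif_pos hk]
  exact (σ _).isLt

lemma permVal_insertMax (σ : Perm (Fin n)) (i : Fin (n + 1)) {k : ℕ} (hk : k < n + 1) :
    permVal (n + 1) (insertMax σ i) k = insertAt n (permVal n σ) i k := by
  rw [permVal, dif_pos hk]
  rcases lt_trichotomy k i with h | rfl | h
  · have hkn : k < n := by omega
    rw [insertAt_of_lt h, permVal, dif_pos hkn,
      show (⟨k, hk⟩ : Fin (n + 1)) = i.succAbove ⟨k, hkn⟩ from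
        (Fin.succAbove_of_castSucc_lt i ⟨k, hkn⟩ h).symm,
      insertMax_apply_succAbove, Fin.val_castSucc]
  · rw [insertAt_self, Fin.eta, insertMax_apply_self, Fin.val_last]
  · have hkn : k - 1 < n := by omega
    rw [insertAt_of_gt h, permVal, dif_pos hkn,
      show (⟨k, hk⟩ : Fin (n + 1)) = i.succAbove ⟨k - 1, hkn⟩ by
        rw [Fin.succAbove_of_le_castSucc _ _ (Fin.le_def.2 (by simp; omega))]
        ext; simp; omega,
      insertMax_apply_succAbove, Fin.val_castSucc]

lemma bijective_insertMax (n : ℕ) :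
    Function.Bijective fun p : Perm (Fin n) × Fin (n + 1) => insertMax p.1 p.2 := by
  refine (Fintype.bijective_iff_injective_and_card _).2 ⟨?_, ?_⟩
  · rintro ⟨σ, i⟩ ⟨σ', i'⟩ h
    simp only at h
    obtain rfl : i = i' := (insertMax σ i).injective <| by
      rw [insertMax_apply_self, h, insertMax_apply_self]
    refine Prod.ext (Equiv.ext fun j => Fin.castSucc_injective n ?_) rfl
    rw [← insertMax_apply_succAbove, ← insertMax_apply_succAbove, h]
  · simp [Fintype.card_perm, Nat.factorial_succ, mul_comm]

lemma maj_insertMax (σ : Perm (Fin n)) (i : Fin (n + 1)) :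
    maj (n + 1) (insertMax σ i) = maj n σ + insertionGain (descSet n σ) n i := by
  rw [maj, maj, descSet_eq_wordDescents, wordDescents_congr fun k hk => permVal_insertMax σ i hk,
    sum_wordDescents_insertAt (fun k => permVal_lt σ) (Nat.lt_succ_iff.1 i.isLt),
    descSet_eq_wordDescents]

/-- MacMahon's theorem. -/
theorem sum_pow_maj {R : Type*} [CommSemiring R] (q : R) (n : ℕ) :
    ∑ π : Perm (Fin n), q ^ maj n π = ∏ m ∈ range n, ∑ j ∈ range (m + 1), q ^ j := by
  induction n with
  | zero => simp [maj, descSet]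
  | succ n ih =>
    calc ∑ π : Perm (Fin (n + 1)), q ^ maj (n + 1) π
        = ∑ σ : Perm (Fin n), ∑ i : Fin (n + 1), q ^ maj (n + 1) (insertMax σ i) := by
          rw [← Fintype.sum_prod_type']
          exact (Fintype.sum_bijective _ (bijective_insertMax n) _ _ fun _ => rfl).symm
      _ = ∑ σ : Perm (Fin n), q ^ maj n σ * ∑ k ∈ range (n + 1), q ^ k := by
          refine sum_congr rfl fun σ _ => ?_
          simp only [maj_insertMax, pow_add, ← mul_sum]
          rw [Fin.sum_univ_eq_sum_range (fun i => q ^ insertionGain (descSet n σ) n i),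
            sum_pow_insertionGain q (D := descSet n σ) wordDescents_subset]
      _ = ∏ m ∈ range (n + 1), ∑ j ∈ range (m + 1), q ^ j := by
          rw [← sum_mul, ih, prod_range_succ]

end Permutations


section ReverseComplement

open Equiv

variable {n : ℕ}

lemma permVal_permCongr_revPerm (π : Perm (Fin n)) {k : ℕ} (hk : k < n) :
    permVal n (Fin.revPerm.permCongr π) k = n - 1 - permVal n π (n - 1 - k) := by
  rw [permVal, dif_pos hk, permVal, dif_pos (by omega), permCongr_apply, Fin.revPerm_symm,
    Fin.revPerm_apply, Fin.val_rev, Fin.revPerm_apply]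
  rw [show Fin.rev ⟨k, hk⟩ = ⟨n - 1 - k, by omega⟩ from Fin.ext (by simp only [Fin.val_rev]; omega)]
  omega

lemma descSet_permCongr_revPerm (π : Perm (Fin n)) :
    descSet n (Fin.revPerm.permCongr π) = (descSet n π).image (n - ·) := by
  ext j
  simp only [descSet_eq_wordDescents, mem_image, mem_wordDescents]
  constructor
  · rintro ⟨⟨hj1, hj2⟩, hd⟩
    rw [permVal_permCongr_revPerm π (by omega), permVal_permCongr_revPerm π (by omega)] at hd
    refine ⟨n - j, ⟨⟨by omega, by omega⟩, ?_⟩, by omega⟩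
    have := permVal_lt π (k := n - 1 - j) (by omega)
    rw [show n - j - 1 = n - 1 - j by omega, show n - 1 - (j - 1) = n - j by omega] at *
    omega
  · rintro ⟨j, ⟨⟨hj1, hj2⟩, hd⟩, rfl⟩
    refine ⟨⟨by omega, by omega⟩, ?_⟩
    rw [permVal_permCongr_revPerm π (by omega), permVal_permCongr_revPerm π (by omega),
      show n - 1 - (n - j) = j - 1 by omega, show n - 1 - (n - j - 1) = j by omega]
    have := permVal_lt π (k := j - 1) (by omega)
    omega

lemma maj_add_maj_permCongr_revPerm (π : Perm (Fin n)) :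
    maj n π + maj n (Fin.revPerm.permCongr π) = n * des n π := by
  have hle : ∀ j ∈ descSet n π, j ≤ n := fun j hj =>
    (mem_Icc.1 (wordDescents_subset hj)).2.trans (Nat.sub_le n 1)
  have hinj : Set.InjOn (n - ·) (descSet n π) := fun a ha b hb hab => by
    have := hle a ha; have := hle b hb; simp only at hab; omega
  rw [maj, maj, des, descSet_permCongr_revPerm, sum_image hinj, ← sum_add_distrib,
    sum_congr rfl fun j hj => Nat.add_sub_cancel' (hle j hj), sum_const, smul_eq_mul, mul_comm]

end ReverseComplement

section Evaluation

variable {K : Type*} [Field K] {q : K}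

theorem sum_zpow_neg_des_mul_pow_maj (hq : q ≠ 0) (n : ℕ) :
    ∑ π : Equiv.Perm (Fin n), (q ^ (-(n : ℤ))) ^ des n π * q ^ maj n π =
      ∏ m ∈ range n, ∑ j ∈ range (m + 1), q⁻¹ ^ j := by
  rw [← sum_pow_maj, ← (Fin.revPerm.permCongr : Equiv.Perm (Fin n) ≃ _).sum_comp
    fun π => q⁻¹ ^ maj n π]
  refine sum_congr rfl fun π _ => ?_
  rw [zpow_neg, zpow_natCast, ← inv_pow, ← pow_mul, ← maj_add_maj_permCongr_revPerm π, pow_add,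
    mul_right_comm, ← mul_pow, inv_mul_cancel₀ hq, one_pow, one_mul]

lemma geom_sum_inv_mul_one_sub (hq : q ≠ 0) (m : ℕ) :
    (∑ j ∈ range (m + 1), q⁻¹ ^ j) * (1 - q) = -q * (1 - q⁻¹ ^ (m + 1)) := by
  linear_combination q * geom_sum_mul q⁻¹ (m + 1) - (∑ j ∈ range (m + 1), q⁻¹ ^ j) *
    inv_mul_cancel₀ hq

theorem prod_geom_sum_inv (hq : q ≠ 0) (hq1 : q ≠ 1) (n : ℕ) :
    ∏ m ∈ range n, ∑ j ∈ range (m + 1), q⁻¹ ^ j =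
      (-q) ^ n * (∏ i ∈ range n, (1 - q ^ (-(n : ℤ)) * q ^ i)) / (1 - q) ^ n := by
  have hpow : ∀ x : K, x ^ n = ∏ _m ∈ range n, x := fun x => by rw [prod_const, card_range]
  rw [eq_div_iff (pow_ne_zero n (sub_ne_zero.2 hq1.symm)), hpow (1 - q), hpow (-q),
    ← prod_range_reflect (fun i => 1 - q ^ (-(n : ℤ)) * q ^ i) n, ← prod_mul_distrib,
    ← prod_mul_distrib]
  refine prod_congr rfl fun m hm => ?_
  obtain ⟨k, rfl⟩ : ∃ k, n = m + 1 + k := ⟨n - (m + 1), by simp at hm; omega⟩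
  rw [geom_sum_inv_mul_one_sub hq, show m + 1 + k - 1 - m = k by omega, zpow_neg, zpow_natCast,
    ← inv_pow, pow_add q⁻¹ (m + 1) k, mul_assoc, ← mul_pow, inv_mul_cancel₀ hq, one_pow, mul_one]

end Evaluation

end CarlitzEulerian

open CarlitzEulerian in
/-- `C_n(q^{-n}, q) = (-q)^n (q^{-n}; q)_n / (1-q)^n`, as rational functions of `q`
(in the field `ℚ(q)` of rational functions, with `q = RatFunc.X`). -/
theorem stmt_8 (n : ℕ) :
    ∑ π : Equiv.Perm (Fin n),
        ((RatFunc.X : RatFunc ℚ) ^ (-(n : ℤ))) ^ des n π * RatFunc.X ^ maj n π =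
      (-RatFunc.X : RatFunc ℚ) ^ n *
        (∏ i ∈ Finset.range n, (1 - RatFunc.X ^ (-(n : ℤ)) * RatFunc.X ^ i)) /
          (1 - RatFunc.X) ^ n := by
  have hX1 : (RatFunc.X : RatFunc ℚ) ≠ 1 := fun h => by
    simpa using congrArg RatFunc.intDegree h
  rw [sum_zpow_neg_des_mul_pow_maj RatFunc.X_ne_zero, prod_geom_sum_inv RatFunc.X_ne_zero hX1]
end

section
/- Let C be an n×n integer matrix whose inverse B = C^{-1} exists and has all nonnegative integer entries, and let e_1,...,e_n be nonnegative integers. The generating function ∑ x_1^{λ_1}···x_n^{λ_n}, summed over all λ ∈ ℤ_{≥0}^n satisfying C λ ≥ e componentwise, equals ∏_{j=1}^n (x_1^{b_{1,j}}···x_n^{b_{n,j}})^{e_j} / ∏_{j=1}^n (1 - x_1^{b_{1,j}}···x_n^{b_{n,j}}). -/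
/-!
Multiplying the indicator series of `{λ : Cλ ≥ e}` by `1 - x^{b_j}`, where `b_j` is the `j`-th
column of `B = C⁻¹`, subtracts its translate by `b_j`. Since `C b_j` is the `j`-th unit vector,
what survives are the points where the `j`-th constraint is tight; that every point with
`(Cλ)_j > e_j` is such a translate is where `B ≥ 0` enters, as `λ - b_j = B (Cλ - u_j) ≥ 0`.
Tightening all `n` constraints leaves the single point `λ = Be`, whose monomial is
`∏_j (x^{b_j})^{e_j}`.
-/

open MvPowerSeries

/-- The generating function `∑_{λ ∈ S_C} x^λ` of the set `S_C` of `λ ∈ ℤ_{≥0}^n`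
satisfying `Cλ ≥ e` componentwise: its coefficient on `x^λ` is 1 when `Cλ ≥ e`, else 0. -/
noncomputable def constrainedGF (n : ℕ) (C : Matrix (Fin n) (Fin n) ℤ) (e : Fin n → ℕ) :
    MvPowerSeries (Fin n) ℤ :=
  fun d => if ∀ i, (e i : ℤ) ≤ ∑ j, C i j * (d j : ℤ) then 1 else 0

namespace MvPowerSeries
variable {σ R : Type*} [CommRing R]

noncomputable def indicator (S : Set (σ →₀ ℕ)) : MvPowerSeries σ R := S.indicator 1

theorem coeff_indicator (S : Set (σ →₀ ℕ)) (d : σ →₀ ℕ) :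
    coeff d (indicator S : MvPowerSeries σ R) = S.indicator 1 d := rfl

theorem indicator_mul_one_sub_monomial {S : Set (σ →₀ ℕ)} {b : σ →₀ ℕ}
    (hS : ∀ d ∈ S, d + b ∈ S) :
    (indicator S : MvPowerSeries σ R) * (1 - monomial b 1) = indicator (S \ (· + b) '' S) := by
  classical
  ext d
  have mem_image : d ∈ (· + b) '' S ↔ b ≤ d ∧ d - b ∈ S :=
    ⟨by rintro ⟨c, hc, rfl⟩; simpa using hc,
     fun ⟨hle, hmem⟩ => ⟨d - b, hmem, tsub_add_cancel_of_le hle⟩⟩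
  have shifted : (if b ≤ d then S.indicator 1 (d - b) else 0) =
      ((· + b) '' S).indicator (1 : (σ →₀ ℕ) → R) d := by
    split_ifs with hle
    · simp only [Set.indicator_apply, mem_image, hle, true_and, Pi.one_apply]
    · exact (Set.indicator_of_notMem (fun h => hle (mem_image.1 h).1) _).symm
  have image_subset : (· + b) '' S ⊆ S := by rintro _ ⟨c, hc, rfl⟩; exact hS c hc
  rw [mul_sub, mul_one, map_sub, coeff_mul_monomial, coeff_indicator, coeff_indicator,
    coeff_indicator, mul_one, shifted, Set.indicator_sdiff image_subset, Pi.sub_apply]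

theorem indicator_singleton (d : σ →₀ ℕ) :
    (indicator {d} : MvPowerSeries σ R) = monomial d 1 := by
  classical
  ext c
  simp only [coeff_indicator, coeff_monomial, Set.indicator_apply, Set.mem_singleton_iff,
    Pi.one_apply]

theorem prod_X_pow_eq_monomial [Fintype σ] (f : σ → ℕ) :
    ∏ i, (X i : MvPowerSeries σ R) ^ f i = monomial (Finsupp.equivFunOnFinite.symm f) 1 := by
  simp only [X_pow_eq, prod_monomial, Finset.prod_const_one,
    Finsupp.equivFunOnFinite_symm_eq_sum]

end MvPowerSeries

open Matrix

section LatticePoints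

variable {ι : Type*} [Fintype ι]

noncomputable def colExponent (B : Matrix ι ι ℕ) (j : ι) : ι →₀ ℕ :=
  Finsupp.equivFunOnFinite.symm fun i => B i j

def faceSet (C : Matrix ι ι ℤ) (e : ι → ℕ) (T : Finset ι) : Set (ι →₀ ℕ) :=
  {d | ∀ i, (e i : ℤ) ≤ (C *ᵥ fun k => (d k : ℤ)) i ∧ (i ∈ T → (C *ᵥ fun k => (d k : ℤ)) i ≤ e i)}

variable [DecidableEq ι] {C : Matrix ι ι ℤ} {B : Matrix ι ι ℕ}

theorem mulVec_add_colExponent (hCB : C * B.map (Nat.cast : ℕ → ℤ) = 1) (d : ι →₀ ℕ) (j : ι) :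
    (C *ᵥ fun k => ((d + colExponent B j) k : ℤ)) = (C *ᵥ fun k => (d k : ℤ)) + Pi.single j 1 := by
  have hcol : (fun k => (colExponent B j k : ℤ)) = B.map (Nat.cast : ℕ → ℤ) *ᵥ Pi.single j 1 := by
    ext k; simp [colExponent]
  simp only [Finsupp.add_apply, Nat.cast_add]
  rw [← Pi.add_def, mulVec_add, hcol, mulVec_mulVec, hCB, one_mulVec]

theorem colExponent_le (hBC : B.map (Nat.cast : ℕ → ℤ) * C = 1) {d : ι →₀ ℕ} {j : ι}
    (h : ∀ i, (Pi.single j 1 : ι → ℤ) i ≤ (C *ᵥ fun k => (d k : ℤ)) i) : colExponent B j ≤ d := by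
  have hdiff : (fun k => (d k : ℤ) - B k j) =
      B.map (Nat.cast : ℕ → ℤ) *ᵥ ((C *ᵥ fun k => (d k : ℤ)) - Pi.single j 1) := by
    rw [mulVec_sub, mulVec_mulVec, hBC, one_mulVec, mulVec_single_one]
    ext k; simp
  intro k
  have : (0 : ℤ) ≤ d k - B k j := by
    rw [congrFun hdiff k]
    exact Finset.sum_nonneg fun l _ => mul_nonneg (by simp) (sub_nonneg.2 (h l))
  simpa [colExponent] using this

variable {e : ι → ℕ} {T : Finset ι} {j : ι}

theorem add_colExponent_mem_faceSet (hCB : C * B.map (Nat.cast : ℕ → ℤ) = 1) (hj : j ∉ T)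
    {d : ι →₀ ℕ} (hd : d ∈ faceSet C e T) : d + colExponent B j ∈ faceSet C e T := by
  intro i
  obtain ⟨hlow, hup⟩ := hd i
  rw [mulVec_add_colExponent hCB, Pi.add_apply, Pi.single_apply]
  split_ifs with hij
  · subst hij
    exact ⟨by linarith, fun hi => absurd hi hj⟩
  · simpa using ⟨hlow, hup⟩

theorem faceSet_sdiff_image_add_colExponent (hCB : C * B.map (Nat.cast : ℕ → ℤ) = 1)
    (hBC : B.map (Nat.cast : ℕ → ℤ) * C = 1) (hj : j ∉ T) :
    faceSet C e T \ (· + colExponent B j) '' faceSet C e T = faceSet C e (insert j T) := by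
  ext d
  constructor
  · rintro ⟨hd, hnot⟩ i
    refine ⟨(hd i).1, fun hi => ?_⟩
    rcases Finset.mem_insert.1 hi with rfl | hiT
    · by_contra! hlt
      have hle : colExponent B i ≤ d := colExponent_le hBC fun k => by
        rw [Pi.single_apply]
        split_ifs with hki
        · subst hki; omega
        · exact (Int.natCast_nonneg _).trans (hd k).1
      have hshift := mulVec_add_colExponent hCB (d - colExponent B i) i
      rw [tsub_add_cancel_of_le hle] at hshift
      refine hnot ⟨d - colExponent B i, fun k => ?_, tsub_add_cancel_of_le hle⟩
      have hk := congrFun hshift k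
      rw [Pi.add_apply, Pi.single_apply] at hk
      split_ifs at hk with hki
      · subst hki; exact ⟨by omega, fun hk' => absurd hk' hj⟩
      · rw [add_zero] at hk
        simpa only [← hk] using hd k
    · exact (hd i).2 hiT
  · intro hd
    refine ⟨fun i => ⟨(hd i).1, fun hi => (hd i).2 (Finset.mem_insert_of_mem hi)⟩, ?_⟩
    rintro ⟨c, hc, rfl⟩
    have hup := (hd j).2 (Finset.mem_insert_self j T)
    rw [mulVec_add_colExponent hCB, Pi.add_apply, Pi.single_eq_same] at hup
    linarith [(hc j).1]

theorem indicator_faceSet_empty_mul_prod {R : Type*} [CommRing R]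
    (hCB : C * B.map (Nat.cast : ℕ → ℤ) = 1) (hBC : B.map (Nat.cast : ℕ → ℤ) * C = 1)
    (T : Finset ι) :
    (MvPowerSeries.indicator (faceSet C e ∅) : MvPowerSeries ι R) *
        ∏ j ∈ T, (1 - MvPowerSeries.monomial (colExponent B j) 1) =
      MvPowerSeries.indicator (faceSet C e T) := by
  induction T using Finset.induction_on with
  | empty => rw [Finset.prod_empty, mul_one]
  | insert j T hj ih =>
    rw [Finset.prod_insert hj, mul_comm (1 - _), ← mul_assoc, ih,
      MvPowerSeries.indicator_mul_one_sub_monomial fun d => add_colExponent_mem_faceSet hCB hj,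
      faceSet_sdiff_image_add_colExponent hCB hBC hj]

theorem faceSet_univ (hCB : C * B.map (Nat.cast : ℕ → ℤ) = 1)
    (hBC : B.map (Nat.cast : ℕ → ℤ) * C = 1) :
    faceSet C e Finset.univ = {Finsupp.equivFunOnFinite.symm (B *ᵥ e)} := by
  have hcast : (fun k => ((B *ᵥ e) k : ℤ)) = B.map (Nat.cast : ℕ → ℤ) *ᵥ fun k => (e k : ℤ) :=
    funext fun k => (Nat.castRingHom ℤ).map_mulVec B e k
  ext d
  simp only [faceSet, Finset.mem_univ, true_implies, Set.mem_singleton_iff]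
  constructor
  · intro hd
    have hCd : (C *ᵥ fun k => (d k : ℤ)) = fun k => (e k : ℤ) :=
      funext fun k => le_antisymm (hd k).2 (hd k).1
    have hd' : (fun k => (d k : ℤ)) = fun k => ((B *ᵥ e) k : ℤ) := by
      rw [hcast, ← hCd, mulVec_mulVec, hBC, one_mulVec]
    ext k
    simpa using congrFun hd' k
  · rintro rfl k
    have hCd : (C *ᵥ fun k => ((B *ᵥ e) k : ℤ)) = fun k => (e k : ℤ) := by
      rw [hcast, mulVec_mulVec, hCB, one_mulVec]
    simp [hCd]

end LatticePoints

theorem constrainedGF_eq_indicator (n : ℕ) (C : Matrix (Fin n) (Fin n) ℤ) (e : Fin n → ℕ) :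
    constrainedGF n C e = indicator (faceSet C e ∅) := by
  classical
  funext d
  simp [constrainedGF, indicator, faceSet, Set.indicator_apply, Matrix.mulVec, dotProduct]

/-- Lemma 1 (lattice-point enumeration): if `C` is an `n×n` integer matrix whose inverse
`B` has nonnegative integer entries, and `e ∈ ℤ_{≥0}^n`, then the generating function of
`{λ ∈ ℤ_{≥0}^n : Cλ ≥ e}` is `∏_j (x^{B_j})^{e_j} / ∏_j (1 - x^{B_j})`, where
`x^{B_j} = ∏_i x_i^{b_{i,j}}`.  Stated with denominators cleared. -/
theorem stmt_9 (n : ℕ) (C : Matrix (Fin n) (Fin n) ℤ) (B : Matrix (Fin n) (Fin n) ℕ)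
    (hCB : C * B.map (Nat.cast : ℕ → ℤ) = 1) (hBC : B.map (Nat.cast : ℕ → ℤ) * C = 1)
    (e : Fin n → ℕ) :
    constrainedGF n C e *
        ∏ j : Fin n, (1 - ∏ i : Fin n, (MvPowerSeries.X i : MvPowerSeries (Fin n) ℤ) ^ B i j) =
      ∏ j : Fin n,
        (∏ i : Fin n, (MvPowerSeries.X i : MvPowerSeries (Fin n) ℤ) ^ B i j) ^ e j := by
  have hcol (j : Fin n) : ∏ i, (X i : MvPowerSeries (Fin n) ℤ) ^ B i j =
      monomial (colExponent B j) 1 :=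
    prod_X_pow_eq_monomial _
  have hBe : ∑ j, e j • colExponent B j = Finsupp.equivFunOnFinite.symm (B *ᵥ e) := by
    ext i
    simp [colExponent, Matrix.mulVec, dotProduct, mul_comm]
  simp only [hcol, monomial_pow, prod_monomial, one_pow, Finset.prod_const_one, hBe]
  rw [constrainedGF_eq_indicator, indicator_faceSet_empty_mul_prod hCB hBC, faceSet_univ hCB hBC,
    indicator_singleton]
end

section
/- For n ≥ 2 and b ≥ 1, the generating function F(q) = ∑ q^{λ_1+...+λ_n}, summed over all λ ∈ ℤ_{≥0}^n such that (nb-b+1)λ_{π(n)} ≥ b(λ_{π(1)}+...+λ_{π(n-1)}) for every permutation π ∈ S_n, equals (1 - q^{n(nb+1)}) / ((1-q^n)(1 - q^{nb+1})^n). -/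
/-!
With `a = nb + 1`, the permutation condition says that every part of `λ` is at least `b|λ|/a`.
Since `a (k + bm) = b (nk + am) + k`, a total `M = nk + am` with `0 ≤ k < a` has
`⌈bM/a⌉ = k + bm`, and subtracting `k + bm` from every part identifies the admissible `λ` of
total `M` with the compositions of `m` into `n` parts. Only totals of this form admit a `λ`, and
their representation is unique (it forces `k ≡ -bM mod a`), so the generating function is
`(∑_{k<a} q^{nk}) (1 - q^a)^{-n}`, and `∑_{k<a} q^{nk} = (1 - q^{na}) / (1 - q^n)`.
-/

open Finset PowerSeries

namespace Nat

theorem le_mul_iff_of_mul_eq_add {a c k t x : ℕ} (hk : k < a) (ht : a * t = c + k) :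
    c ≤ a * x ↔ t ≤ x := by
  refine ⟨fun h => Nat.le_of_lt_succ <| Nat.lt_of_mul_lt_mul_left (a := a) ?_, fun h => ?_⟩
  · rw [Nat.mul_succ]
    omega
  · have := Nat.mul_le_mul_left a h
    omega

theorem eq_of_mul_eq_add_of_lt {a c k k' t t' : ℕ} (hk : k < a) (hk' : k' < a)
    (ht : a * t = c + k) (ht' : a * t' = c + k') : k = k' := by
  have h₁ := (le_mul_iff_of_mul_eq_add hk ht).1 (ht' ▸ Nat.le_add_right c k')
  have h₂ := (le_mul_iff_of_mul_eq_add hk' ht').1 (ht ▸ Nat.le_add_right c k)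
  rw [le_antisymm h₁ h₂] at ht
  omega

theorem exists_mul_eq_add_of_pos {a : ℕ} (ha : 0 < a) (c : ℕ) :
    ∃ t k, k < a ∧ a * t = c + k := by
  have h := Nat.div_add_mod (c + (a - 1)) a
  have := Nat.mod_lt (c + (a - 1)) ha
  exact ⟨(c + (a - 1)) / a, a * ((c + (a - 1)) / a) - c, by omega, by omega⟩

end Nat

namespace Finset

variable {ι : Type*} [Fintype ι] [DecidableEq ι]

theorem filter_piFinset_range_eq_filter_piAntidiag (M : ℕ) (P : (ι → ℕ) → Prop)
    [DecidablePred P] :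
    ((Fintype.piFinset fun _ : ι => range (M + 1)).filter fun l => ∑ i, l i = M ∧ P l) =
      (piAntidiag univ M).filter P := by
  ext l
  simp only [mem_filter, Fintype.mem_piFinset, mem_range, mem_piAntidiag, mem_univ,
    implies_true, and_true, and_iff_right_iff_imp, Nat.lt_succ_iff]
  rintro ⟨rfl, -⟩ i
  exact single_le_sum (fun i _ => Nat.zero_le _) (mem_univ i)

theorem card_filter_piAntidiag_le (t m : ℕ) [DecidablePred fun l : ι → ℕ => ∀ j, t ≤ l j] :
    #((piAntidiag univ (Fintype.card ι * t + m)).filter fun l : ι → ℕ => ∀ j, t ≤ l j) =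
      #(piAntidiag (univ : Finset ι) m) := by
  refine card_nbij' (fun l j => l j - t) (fun l j => l j + t) ?_ ?_ ?_ ?_
  · intro l hl
    simp only [coe_filter, mem_piAntidiag, mem_univ, implies_true, and_true,
      Set.mem_ofPred_eq, mem_coe] at hl ⊢
    rw [sum_tsub_distrib _ fun i _ => hl.2 i, hl.1, sum_const, card_univ, smul_eq_mul]
    omega
  · intro l hl
    simp only [coe_filter, mem_piAntidiag, mem_univ, implies_true, and_true,
      Set.mem_ofPred_eq, mem_coe, le_add_iff_nonneg_left, zero_le] at hl ⊢
    rw [sum_add_distrib, hl, sum_const, card_univ, smul_eq_mul]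
    omega
  · intro l hl
    funext j
    exact Nat.sub_add_cancel ((mem_filter.1 hl).2 j)
  · intro l _
    funext j
    exact Nat.add_sub_cancel (l j) t

theorem filter_piAntidiag_le_eq_empty {t M : ℕ} [DecidablePred fun l : ι → ℕ => ∀ j, t ≤ l j]
    (h : M < Fintype.card ι * t) :
    (piAntidiag univ M).filter (fun l : ι → ℕ => ∀ j, t ≤ l j) = ∅ := by
  refine filter_eq_empty_iff.2 fun l hl ht => h.not_ge ?_
  calc Fintype.card ι * t = ∑ _ : ι, t := by simp
    _ ≤ ∑ i, l i := sum_le_sum fun i _ => ht i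
    _ = M := (mem_piAntidiag.1 hl).1

end Finset

namespace PowerSeries

variable {R : Type*} [CommRing R]

theorem coeff_mk_one_pow (ι : Type*) [Fintype ι] [DecidableEq ι] (m : ℕ) :
    coeff m ((mk 1 : R⟦X⟧) ^ Fintype.card ι) = #(piAntidiag (univ : Finset ι) m) := by
  rw [← card_univ, ← prod_const, coeff_prod, ← map_sym_eq_piAntidiag, card_map, sym_univ,
    card_univ, Sym.card_sym_eq_choose, ← card_univ, ← card_finsuppAntidiag_nat_eq_choose]
  simp

theorem coeff_X_pow_mul_expand_add_mul {a : ℕ} (ha : a ≠ 0) (f : R⟦X⟧) (i m : ℕ) :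
    coeff (i + a * m) (X ^ i * expand a ha f) = coeff m f := by
  rw [coeff_X_pow_mul', if_pos (Nat.le_add_right i _), Nat.add_sub_cancel_left,
    coeff_expand_mul]

theorem coeff_X_pow_mul_expand_of_forall_ne {a : ℕ} (ha : a ≠ 0) (f : R⟦X⟧) {i M : ℕ}
    (h : ∀ m, i + a * m ≠ M) : coeff M (X ^ i * expand a ha f) = 0 := by
  rw [coeff_X_pow_mul']
  split_ifs with hi
  · exact coeff_expand_of_not_dvd a ha f fun ⟨m, hm⟩ => h m (by omega)
  · rfl

end PowerSeries

def balancedCompositions (n b M : ℕ) : Finset (Fin n → ℕ) :=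
  (piAntidiag univ M).filter fun l => ∀ j, b * M ≤ (n * b + 1) * l j

section BalancedCompositions

variable {n b : ℕ}

theorem perm_condition_iff (p : Fin n) (l : Fin n → ℕ) :
    (∀ π : Equiv.Perm (Fin n), b * ∑ i ∈ univ.erase p, l (π i) ≤ (n * b - b + 1) * l (π p)) ↔
      ∀ j, b * ∑ i, l i ≤ (n * b + 1) * l j := by
  have hb : b ≤ n * b := Nat.le_mul_of_pos_left b (Fin.pos p)
  have key (π : Equiv.Perm (Fin n)) :
      b * ∑ i ∈ univ.erase p, l (π i) ≤ (n * b - b + 1) * l (π p) ↔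
        b * ∑ i, l i ≤ (n * b + 1) * l (π p) := by
    rw [← Equiv.sum_comp π l, ← sum_erase_add _ _ (mem_univ p),
      show n * b + 1 = n * b - b + 1 + b by omega, mul_add b, add_mul _ b, add_le_add_iff_right]
  simp_rw [key]
  exact ⟨fun h j => by simpa using h (Equiv.swap p j), fun h π => h (π p)⟩

theorem filter_perm_condition_eq_balancedCompositions (p : Fin n) (M : ℕ) :
    ((Fintype.piFinset fun _ : Fin n => range (M + 1)).filter fun l => ∑ i, l i = M ∧
      ∀ π : Equiv.Perm (Fin n), b * ∑ i ∈ univ.erase p, l (π i) ≤ (n * b - b + 1) * l (π p)) =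
      balancedCompositions n b M := by
  rw [filter_piFinset_range_eq_filter_piAntidiag, balancedCompositions]
  refine filter_congr fun l hl => ?_
  rw [perm_condition_iff, (mem_piAntidiag.1 hl).1]

theorem balancedCompositions_eq_filter_le {k t M : ℕ} (hk : k < n * b + 1)
    (ht : (n * b + 1) * t = b * M + k) :
    balancedCompositions n b M = (piAntidiag univ M).filter fun l => ∀ j, t ≤ l j := by
  ext l
  simp only [balancedCompositions, mem_filter, Nat.le_mul_iff_of_mul_eq_add hk ht]

theorem card_balancedCompositions_mul_add {k : ℕ} (hk : k < n * b + 1) (m : ℕ) :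
    #(balancedCompositions n b (n * k + (n * b + 1) * m)) =
      #(piAntidiag (univ : Finset (Fin n)) m) := by
  rw [balancedCompositions_eq_filter_le hk (t := k + b * m) (by ring),
    show n * k + (n * b + 1) * m = Fintype.card (Fin n) * (k + b * m) + m by simp; ring]
  exact card_filter_piAntidiag_le _ _

theorem balancedCompositions_eq_empty {M : ℕ}
    (h : ∀ k < n * b + 1, ∀ m, n * k + (n * b + 1) * m ≠ M) :
    balancedCompositions n b M = ∅ := by
  obtain ⟨t, k, hk, ht⟩ := Nat.exists_mul_eq_add_of_pos (n * b).succ_pos (b * M)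
  rw [balancedCompositions_eq_filter_le hk ht]
  refine filter_piAntidiag_le_eq_empty (lt_of_not_ge fun hM => ?_)
  rw [Fintype.card_fin] at hM
  obtain ⟨m, rfl⟩ := Nat.exists_eq_add_of_le hM
  have htm : t = k + b * m := by linarith
  exact h k hk m (by rw [htm]; ring)

theorem eq_of_mul_add_eq_mul_add {k k' m m' : ℕ} (hk : k < n * b + 1) (hk' : k' < n * b + 1)
    (h : n * k + (n * b + 1) * m = n * k' + (n * b + 1) * m') : k = k' := by
  refine Nat.eq_of_mul_eq_add_of_lt (c := b * (n * k + (n * b + 1) * m)) (t := k + b * m)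
    (t' := k' + b * m') hk hk' (by ring) ?_
  rw [h]
  ring

theorem coeff_geom_mul_expand_eq_card (M : ℕ) :
    coeff M ((∑ k ∈ range (n * b + 1), X ^ (n * k)) *
      expand (n * b + 1) (n * b).succ_ne_zero (PowerSeries.mk 1 ^ n) : ℤ⟦X⟧) =
      #(balancedCompositions n b M) := by
  rw [sum_mul, map_sum]
  by_cases hM : ∃ k < n * b + 1, ∃ m, n * k + (n * b + 1) * m = M
  · obtain ⟨k, hk, m, rfl⟩ := hM
    rw [sum_eq_single_of_mem k (mem_range.2 hk), coeff_X_pow_mul_expand_add_mul,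
      card_balancedCompositions_mul_add hk]
    · simpa using coeff_mk_one_pow (R := ℤ) (Fin n) m
    · exact fun k' hk' hne => coeff_X_pow_mul_expand_of_forall_ne _ _ fun m' h =>
        hne (eq_of_mul_add_eq_mul_add (mem_range.1 hk') hk h)
  · push Not at hM
    rw [balancedCompositions_eq_empty hM, card_empty, Nat.cast_zero]
    exact sum_eq_zero fun k hk => coeff_X_pow_mul_expand_of_forall_ne _ _ (hM k (mem_range.1 hk))

end BalancedCompositions

theorem mk_card_perm_condition_eq {n : ℕ} (b : ℕ) (p : Fin n) :
    (PowerSeries.mk fun M => ((#((Fintype.piFinset fun _ : Fin n => range (M + 1)).filter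
      fun l => ∑ i, l i = M ∧ ∀ π : Equiv.Perm (Fin n),
        b * ∑ i ∈ univ.erase p, l (π i) ≤ (n * b - b + 1) * l (π p)) : ℕ) : ℤ)) =
      (∑ k ∈ range (n * b + 1), X ^ (n * k)) *
        expand (n * b + 1) (n * b).succ_ne_zero (PowerSeries.mk 1 ^ n) := by
  ext M
  rw [coeff_mk, filter_perm_condition_eq_balancedCompositions, coeff_geom_mul_expand_eq_card]

/-- Example 1: for `n ≥ 2`, `b ≥ 1`, the generating function `∑_λ q^{λ₁+⋯+λₙ}` over
`λ ∈ ℤ_{≥0}^n` with `(nb-b+1)λ_{π(n)} ≥ b(λ_{π(1)}+⋯+λ_{π(n-1)})` for all `π ∈ Sₙ`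
equals `(1 - q^{n(nb+1)}) / ((1-q^n)(1-q^{nb+1})^n)`; stated with denominators cleared,
the coefficient of `q^M` being the number of such `λ` with `|λ| = M`. -/
theorem stmt_11 (n b : ℕ) (hn : 2 ≤ n) :
    (PowerSeries.mk fun M =>
        ((((Fintype.piFinset fun _ : Fin n => Finset.range (M + 1)).filter
          (fun l => ∑ i, l i = M ∧ ∀ π : Equiv.Perm (Fin n),
            b * ∑ i ∈ Finset.univ.erase (⟨n - 1, by omega⟩ : Fin n), l (π i) ≤
              (n * b - b + 1) * l (π ⟨n - 1, by omega⟩))).card : ℤ))) *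
      ((1 - (PowerSeries.X : PowerSeries ℤ) ^ n) * (1 - PowerSeries.X ^ (n * b + 1)) ^ n) =
    1 - (PowerSeries.X : PowerSeries ℤ) ^ (n * (n * b + 1)) := by
  rw [mk_card_perm_condition_eq b ⟨n - 1, by omega⟩]
  calc _ = ((∑ k ∈ range (n * b + 1), ((X : ℤ⟦X⟧) ^ n) ^ k) * (1 - X ^ n)) *
          expand (n * b + 1) (n * b).succ_ne_zero ((PowerSeries.mk 1 * (1 - X)) ^ n) := by
        simp only [← pow_mul, mul_pow, map_mul, map_pow, map_sub, map_one, expand_X]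
        ring
    _ = 1 - X ^ (n * (n * b + 1)) := by
        rw [geom_sum_mul_neg, mk_one_mul_one_sub_eq_one, one_pow, map_one, mul_one, ← pow_mul]
end

section
/- For n ≥ 2 and b ≥ 1, the generating function F(q) = ∑ q^{λ_1+...+λ_n}, over all λ ∈ ℤ_{≥0}^n satisfying b(λ_{π(2)}+...+λ_{π(n)}) ≥ (nb-b-1)λ_{π(1)} for every π ∈ S_n, equals (1 - q^{n(nb-1)}) / ((1-q^n)(1 - q^{nb-1})^n). -/
/-!
Put `m = nb - 1`. Since `λ_{π(1)}` plus the other parts is `|λ|`, the constraint for `π`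
says `m λ_{π(1)} ≤ b |λ|`, so `λ` is admissible iff every part satisfies `m λ_j ≤ b |λ|`.
Write `b |λ| = m T + k` with `0 ≤ k < m`. Then `λ ↦ (k, (T - λ_j)_j)` is a bijection from
admissible tuples onto `{0, …, m-1} × ℕⁿ`, with inverse `(k, t) ↦ (k + b ∑ t - t_j)_j`,
and it sends `|λ|` to `n k + m ∑ t`. Hence the generating function is
`(∑_{k < m} q^{nk}) · (1 - q^m)^{-n}`, and `∑_{k < m} q^{nk} · (1 - q^n) = 1 - q^{nm}`.
-/

open Finset PowerSeries

section Fibers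

variable {α β : Type*}

def fiberAddEquiv (w : α → ℕ) (v : β → ℕ) (M : ℕ) :
    {p : α × β // w p.1 + v p.2 = M} ≃
      Σ q : antidiagonal M, {a // w a = q.1.1} × {b // v b = q.1.2} where
  toFun p := ⟨⟨(w p.1.1, v p.1.2), mem_antidiagonal.2 p.2⟩, ⟨p.1.1, rfl⟩, ⟨p.1.2, rfl⟩⟩
  invFun s := ⟨(s.2.1, s.2.2), by rw [s.2.1.2, s.2.2.2]; exact mem_antidiagonal.1 s.1.2⟩
  left_inv _ := rfl
  right_inv := by
    rintro ⟨⟨⟨i, j⟩, h⟩, ⟨a, ha⟩, ⟨b, hb⟩⟩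
    dsimp only at ha hb
    subst ha hb
    rfl

variable {w : α → ℕ} {v : β → ℕ}

lemma finite_fiber_congr (e : α ≃ β) (h : ∀ a, v (e a) = w a) {M : ℕ}
    (hw : Finite {a // w a = M}) : Finite {b // v b = M} :=
  Finite.of_equiv _ (e.subtypeEquiv (p := fun a => w a = M) (q := fun b => v b = M)
    fun a => by rw [h])

lemma finite_fiber_add (hw : ∀ M, Finite {a // w a = M}) (hv : ∀ M, Finite {b // v b = M})
    (M : ℕ) : Finite {p : α × β // w p.1 + v p.2 = M} :=
  Finite.of_equiv _ (fiberAddEquiv w v M).symm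

lemma finite_fiber_sum_pi (hw : ∀ M, Finite {a // w a = M}) :
    ∀ (j M : ℕ), Finite {t : Fin j → α // ∑ i, w (t i) = M}
  | 0, _ => inferInstance
  | j + 1, M =>
    have := finite_fiber_add hw (finite_fiber_sum_pi hw j) M
    finite_fiber_congr (Fin.consEquiv fun _ => α) (by simp [Fin.sum_univ_succ]) this

lemma subsingleton_fiber_mul {m : ℕ} (hm : 0 < m) (M : ℕ) :
    Subsingleton {s : ℕ // m * s = M} :=
  ⟨fun x y => Subtype.ext (Nat.eq_of_mul_eq_mul_left hm (x.2.trans y.2.symm))⟩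

lemma natCard_fiber_mul {m : ℕ} (hm : 0 < m) (M : ℕ) :
    Nat.card {s : ℕ // m * s = M} = if m ∣ M then 1 else 0 := by
  have := subsingleton_fiber_mul hm M
  split_ifs with h
  · obtain ⟨c, rfl⟩ := h
    exact Nat.card_eq_one_iff_unique.2 ⟨this, ⟨c, rfl⟩⟩
  · have : IsEmpty {s : ℕ // m * s = M} := ⟨fun s => h ⟨s.1, s.2.symm⟩⟩
    exact Nat.card_of_isEmpty

end Fibers

namespace PowerSeries

variable {α β : Type*}

/- `Nat.card` is `0` on an infinite fibre, so the product rules below assume finite fibres. -/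
noncomputable def weightGenFun (R : Type*) [Semiring R] (w : α → ℕ) : R⟦X⟧ :=
  mk fun M => (Nat.card {a // w a = M} : R)

variable {R : Type*}

section Semiring

variable [Semiring R]

@[simp]
lemma coeff_weightGenFun (w : α → ℕ) (M : ℕ) :
    coeff M (weightGenFun R w) = Nat.card {a // w a = M} :=
  coeff_mk _ _

lemma weightGenFun_congr {w : α → ℕ} {v : β → ℕ} (e : α ≃ β) (h : ∀ a, v (e a) = w a) :
    weightGenFun R v = weightGenFun R w := by
  ext M
  simp only [coeff_weightGenFun]
  rw [Nat.card_congr (e.subtypeEquiv (p := fun a => w a = M) (q := fun b => v b = M)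
    fun a => by rw [h])]

lemma weightGenFun_eq_sum_X_pow [Fintype α] (w : α → ℕ) :
    weightGenFun R w = ∑ a, X ^ w a := by
  classical
  ext M
  simp [coeff_X_pow, Nat.card_eq_fintype_card, Fintype.card_subtype, eq_comm]

variable {w : α → ℕ} {v : β → ℕ}

lemma weightGenFun_add (hw : ∀ M, Finite {a // w a = M}) (hv : ∀ M, Finite {b // v b = M}) :
    weightGenFun R (fun p : α × β => w p.1 + v p.2) = weightGenFun R w * weightGenFun R v := by
  ext M
  rw [coeff_mul, coeff_weightGenFun, Nat.card_congr (fiberAddEquiv w v M), Nat.card_sigma,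
    ← sum_coe_sort (antidiagonal M)]
  push_cast
  simp [Nat.card_prod]

lemma weightGenFun_sum_pi (hw : ∀ M, Finite {a // w a = M}) (j : ℕ) :
    weightGenFun R (fun t : Fin j → α => ∑ i, w (t i)) = weightGenFun R w ^ j := by
  induction j with
  | zero =>
    ext M
    rcases eq_or_ne M 0 with rfl | hM
    · simp
    · simp [hM, eq_comm]
  | succ j ih =>
    rw [pow_succ', ← ih, ← weightGenFun_add hw (finite_fiber_sum_pi hw j)]
    exact weightGenFun_congr (Fin.consEquiv fun _ => α) fun p => by simp [Fin.sum_univ_succ]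

end Semiring

section Ring

variable [CommRing R]

lemma weightGenFun_fin_mul_one_sub_X_pow (n m : ℕ) :
    weightGenFun R (fun k : Fin m => n * (k : ℕ)) * (1 - X ^ n) = 1 - X ^ (n * m) := by
  rw [weightGenFun_eq_sum_X_pow, Fin.sum_univ_eq_sum_range (fun k => (X : R⟦X⟧) ^ (n * k))]
  simp_rw [pow_mul]
  exact geom_sum_mul_neg _ _

lemma weightGenFun_nat_mul_one_sub_X_pow {m : ℕ} (hm : 0 < m) :
    weightGenFun R (fun s : ℕ => m * s) * (1 - X ^ m) = 1 := by
  ext M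
  rw [mul_sub, mul_one, map_sub, coeff_mul_X_pow', coeff_one]
  simp only [coeff_weightGenFun, natCard_fiber_mul hm]
  rcases Nat.eq_zero_or_pos M with rfl | hM
  · simp [hm.ne']
  · by_cases hmM : m ≤ M
    · have : m ∣ M ∨ M ≤ m ↔ m ∣ M :=
        or_iff_left_of_imp fun h => by rw [le_antisymm h hmM]
      simp [hmM, hM.ne', Nat.dvd_sub_self_right, this]
    · have : ¬ m ∣ M := fun h => hmM (Nat.le_of_dvd hM h)
      simp [hmM, this, hM.ne']

end Ring

end PowerSeries

lemma forall_perm_le_iff {ι : Type*} [Fintype ι] [DecidableEq ι] (i₀ : ι) (c b : ℕ)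
    (l : ι → ℕ) :
    (∀ π : Equiv.Perm ι, c * l (π i₀) ≤ b * ∑ i ∈ univ.erase i₀, l (π i)) ↔
      ∀ j, (c + b) * l j ≤ b * ∑ i, l i := by
  have hle (π : Equiv.Perm ι) : c * l (π i₀) ≤ b * ∑ i ∈ univ.erase i₀, l (π i) ↔
      (c + b) * l (π i₀) ≤ b * ∑ i, l i := by
    rw [← Equiv.sum_comp π, ← sum_erase_add _ _ (mem_univ i₀), add_mul, mul_add]
    omega
  refine ⟨fun h j => ?_, fun h π => (hle π).2 (h _)⟩
  simpa using (hle (Equiv.swap i₀ j)).1 (h _)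

abbrev BoundedShareTuple (ι : Type*) [Fintype ι] (b m : ℕ) :=
  {l : ι → ℕ // ∀ j, m * l j ≤ b * ∑ i, l i}

lemma card_filter_forall_perm_le {ι : Type*} [Fintype ι] [DecidableEq ι] (i₀ : ι)
    {c b m : ℕ} (hcb : c + b = m) (M : ℕ) :
    ((Fintype.piFinset fun _ : ι => range (M + 1)).filter fun l => ∑ i, l i = M ∧
        ∀ π : Equiv.Perm ι, c * l (π i₀) ≤ b * ∑ i ∈ univ.erase i₀, l (π i)).card =
      Nat.card {l : BoundedShareTuple ι b m // ∑ i, l.1 i = M} := by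
  rw [← Nat.card_eq_finsetCard]
  refine Nat.card_congr ((Equiv.subtypeSubtypeEquivSubtypeInter
    (fun l : ι → ℕ => ∀ j, m * l j ≤ b * ∑ i, l i) (fun l => ∑ i, l i = M)).trans
    (Equiv.subtypeEquivRight fun l => ?_)).symm
  simp only [mem_filter, Fintype.mem_piFinset, mem_range, forall_perm_le_iff, hcb]
  refine ⟨fun ⟨hl, hM⟩ => ⟨fun i => ?_, hM, hl⟩, fun ⟨_, hM, hl⟩ => ⟨hl, hM⟩⟩
  rw [Nat.lt_succ_iff, ← hM]
  exact single_le_sum (fun _ _ => Nat.zero_le _) (mem_univ i)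

section BoundedShareTuple

variable {n b m : ℕ}

lemma sum_add_sum_eq_of_add_eq {l t : Fin n → ℕ} {c : ℕ} (h : ∀ j, l j + t j = c) :
    ∑ j, l j + ∑ j, t j = n * c := by
  simp [← sum_add_distrib, h]

lemma mul_add_mul_eq_of_add_eq (hm : n * b = m + 1) {L S c : ℕ} (h : L + S = n * c) :
    b * L + b * S = m * c + c := by
  rw [← mul_add, h, ← mul_assoc, mul_comm b n, hm, add_one_mul]

lemma le_add_mul_sum (hm : n * b = m + 1) (k : ℕ) (t : Fin n → ℕ) (j : Fin n) :
    t j ≤ k + b * ∑ i, t i := by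
  have hb : 1 ≤ b := Nat.pos_of_ne_zero (by rintro rfl; simp at hm)
  have := single_le_sum (fun i _ => Nat.zero_le (t i)) (mem_univ j)
  nlinarith

def shareTupleOf (b k : ℕ) (t : Fin n → ℕ) : Fin n → ℕ := fun j => k + b * ∑ i, t i - t j

lemma sum_shareTupleOf (hm : n * b = m + 1) (k : ℕ) (t : Fin n → ℕ) :
    ∑ j, shareTupleOf b k t j = n * k + m * ∑ i, t i := by
  have := sum_add_sum_eq_of_add_eq fun j => Nat.sub_add_cancel (le_add_mul_sum hm k t j)
  rw [mul_add, ← mul_assoc, hm, add_one_mul] at this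
  unfold shareTupleOf
  omega

lemma mul_sum_shareTupleOf (hm : n * b = m + 1) (k : ℕ) (t : Fin n → ℕ) :
    b * ∑ j, shareTupleOf b k t j = m * (k + b * ∑ i, t i) + k := by
  have := mul_add_mul_eq_of_add_eq hm
    (sum_add_sum_eq_of_add_eq fun j => Nat.sub_add_cancel (le_add_mul_sum hm k t j))
  unfold shareTupleOf
  omega

def boundedShareEquiv (hm : n * b = m + 1) (hm0 : 0 < m) :
    BoundedShareTuple (Fin n) b m ≃ Fin m × (Fin n → ℕ) where
  toFun l := (⟨(b * ∑ i, l.1 i) % m, Nat.mod_lt _ hm0⟩, fun j => (b * ∑ i, l.1 i) / m - l.1 j)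
  invFun p := ⟨shareTupleOf b p.1 p.2, fun j => by
    rw [mul_sum_shareTupleOf hm]
    have : m * shareTupleOf b p.1 p.2 j ≤ m * (p.1 + b * ∑ i, p.2 i) :=
      Nat.mul_le_mul_left m (Nat.sub_le _ _)
    omega⟩
  left_inv := by
    rintro ⟨l, hl⟩
    ext j
    have hle (j : Fin n) : l j ≤ (b * ∑ i, l i) / m :=
      (Nat.le_div_iff_mul_le hm0).2 (mul_comm m (l j) ▸ hl j)
    have hsum : b * ∑ i, l i + b * ∑ i, ((b * ∑ i, l i) / m - l i) =
        m * ((b * ∑ i, l i) / m) + (b * ∑ i, l i) / m :=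
      mul_add_mul_eq_of_add_eq hm (sum_add_sum_eq_of_add_eq fun j => Nat.add_sub_cancel' (hle j))
    have hdiv := Nat.div_add_mod (b * ∑ i, l i) m
    have := hle j
    simp only [shareTupleOf]
    omega
  right_inv := by
    rintro ⟨k, t⟩
    have hk : (b * ∑ j, shareTupleOf b k t j) / m = k + b * ∑ i, t i := by
      rw [mul_sum_shareTupleOf hm, Nat.mul_add_div hm0, Nat.div_eq_of_lt k.2, add_zero]
    refine Prod.ext (Fin.ext ?_) (funext fun j => ?_)
    · simp only [mul_sum_shareTupleOf hm, Nat.mul_add_mod, Nat.mod_eq_of_lt k.2]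
    · show (b * ∑ i, shareTupleOf b k t i) / m - shareTupleOf b k t j = t j
      rw [hk]
      exact Nat.sub_sub_self (le_add_mul_sum hm k t j)

lemma sum_boundedShareEquiv_symm (hm : n * b = m + 1) (hm0 : 0 < m)
    (p : Fin m × (Fin n → ℕ)) :
    ∑ i, ((boundedShareEquiv hm hm0).symm p).1 i = n * p.1 + ∑ i, m * p.2 i := by
  rw [← mul_sum]
  exact sum_shareTupleOf hm p.1 p.2

theorem weightGenFun_boundedShareTuple_mul {R : Type*} [CommRing R] (hm : n * b = m + 1)
    (hm0 : 0 < m) :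
    weightGenFun R (fun l : BoundedShareTuple (Fin n) b m => ∑ i, l.1 i) *
      ((1 - X ^ n) * (1 - X ^ m) ^ n) = 1 - X ^ (n * m) := by
  have hfiber (M : ℕ) : Finite {s : ℕ // m * s = M} :=
    have := subsingleton_fiber_mul hm0 M
    Finite.of_subsingleton
  have hprod : weightGenFun R (fun p : Fin m × (Fin n → ℕ) => n * (p.1 : ℕ) + ∑ i, m * p.2 i) =
      weightGenFun R (fun k : Fin m => n * (k : ℕ)) * weightGenFun R (fun s : ℕ => m * s) ^ n := by
    rw [← weightGenFun_sum_pi hfiber n]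
    exact weightGenFun_add (w := fun k : Fin m => n * (k : ℕ))
      (v := fun t : Fin n → ℕ => ∑ i, m * t i) (fun _ => inferInstance)
      (finite_fiber_sum_pi hfiber n)
  rw [weightGenFun_congr (boundedShareEquiv hm hm0).symm (sum_boundedShareEquiv_symm hm hm0),
    hprod]
  calc _ = (weightGenFun R (fun k : Fin m => n * (k : ℕ)) * (1 - X ^ n)) *
        (weightGenFun R (fun s : ℕ => m * s) * (1 - X ^ m)) ^ n := by rw [mul_pow]; ring
    _ = _ := by
      rw [weightGenFun_fin_mul_one_sub_X_pow, weightGenFun_nat_mul_one_sub_X_pow hm0,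
        one_pow, mul_one]

end BoundedShareTuple

/-- Example 2: for `n ≥ 2`, `b ≥ 1`, the generating function `∑_λ q^{λ₁+⋯+λₙ}` over
`λ ∈ ℤ_{≥0}^n` with `b(λ_{π(2)}+⋯+λ_{π(n)}) ≥ (nb-b-1)λ_{π(1)}` for all `π ∈ Sₙ`
equals `(1 - q^{n(nb-1)}) / ((1-q^n)(1-q^{nb-1})^n)`; stated with denominators cleared,
the coefficient of `q^M` being the number of such `λ` with `|λ| = M`. -/
theorem stmt_12 (n b : ℕ) (hn : 2 ≤ n) (hb : 1 ≤ b) :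
    (PowerSeries.mk fun M =>
        ((((Fintype.piFinset fun _ : Fin n => Finset.range (M + 1)).filter
          (fun l => ∑ i, l i = M ∧ ∀ π : Equiv.Perm (Fin n),
            (n * b - b - 1) * l (π ⟨0, by omega⟩) ≤
              b * ∑ i ∈ Finset.univ.erase (⟨0, by omega⟩ : Fin n), l (π i))).card : ℤ))) *
      ((1 - (PowerSeries.X : PowerSeries ℤ) ^ n) * (1 - PowerSeries.X ^ (n * b - 1)) ^ n) =
    1 - (PowerSeries.X : PowerSeries ℤ) ^ (n * (n * b - 1)) := by
  have h2b : 2 * b ≤ n * b := Nat.mul_le_mul_right b hn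
  have hm : n * b = (n * b - 1) + 1 := by omega
  convert weightGenFun_boundedShareTuple_mul (R := ℤ) hm (by omega) using 2
  ext M
  rw [coeff_mk, coeff_weightGenFun,
    card_filter_forall_perm_le _ (by omega : n * b - b - 1 + b = n * b - 1)]
end

section
/- Define polynomials G_n^{(i)} in variables u_1, u_2, ... by G_n^{(i)} = ∑_{π} ∏_{j ∈ D_π} u_j, where the sum is over permutations π ∈ S_n ending in i (π(n) = i). Then G_n^{(i)} = G_n^{(i-1)} + (1 - u_{n-1}) G_{n-1}^{(i-1)} for i > 1, and G_n^{(1)} = u_{n-1} ∑_{j=1}^{n-1} G_{n-1}^{(j)}, with G_1^{(1)} = 1. -/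
/-- `G_n^{(i)} = ∑_π ∏_{j ∈ D_π} u_j`, summed over permutations `π ∈ Sₙ` ending in `i`
(`π(n) = i`), a polynomial in variables `u_1, u_2, …` (with `u_j = X j`). -/
noncomputable def G (n i : ℕ) : MvPolynomial ℕ ℤ :=
  ∑ π ∈ Finset.univ.filter (fun π : Equiv.Perm (Fin n) => permVal n π (n - 1) + 1 = i),
    ∏ j ∈ descSet n π, MvPolynomial.X j

/-!
Removing the last entry `i` of `π ∈ S_{m+1}` and standardizing is a bijection onto `S_m` that
preserves the descents below `m`, while `π` has a descent at `m` iff `σ(m) ≥ i`. Hence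
`G_{m+1}^{(i)} = ∑_{σ ∈ S_m} u_m^{[σ(m) ≥ i]} u^{D_σ}`. For `i = 1` every weight is `u_m`; passing
from `i - 1` to `i` changes the weight from `u_m` to `1` exactly when `σ(m) = i - 1`, which
contributes `(1 - u_m) G_m^{(i-1)}`.
-/

open Equiv Finset MvPolynomial

theorem Equiv.optionCongr_removeNone {α β : Type*} {e : Option α ≃ Option β}
    (h : e none = none) : e.removeNone.optionCongr = e := by
  ext1 (_ | a)
  · simpa using h.symm
  · obtain ⟨b, hb⟩ := Option.ne_none_iff_exists'.mp fun ha =>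
      Option.some_ne_none a (e.injective (ha.trans h.symm))
    exact removeNone_some e ⟨b, hb⟩

theorem Fin.val_succAbove {n : ℕ} (p : Fin (n + 1)) (i : Fin n) :
    (p.succAbove i : ℕ) = if (i : ℕ) < p then (i : ℕ) else i + 1 := by
  by_cases h : (i : ℕ) < p
  · rw [if_pos h, Fin.succAbove_of_castSucc_lt _ _ h, Fin.val_castSucc]
  · rw [if_neg h, Fin.succAbove_of_le_castSucc _ _ (Fin.le_def.mpr (by simpa using h)),
      Fin.val_succ]

section insertLast

variable {m : ℕ}

/-- Inverse of the identification of the paper: the permutation ending in `c` whose first `m`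
values standardize to `σ`. -/
def insertLast (c : Fin (m + 1)) (σ : Perm (Fin m)) : Perm (Fin (m + 1)) :=
  (finSuccEquiv' (Fin.last m)).trans (σ.optionCongr.trans (finSuccEquiv' c).symm)

variable (c : Fin (m + 1)) (σ : Perm (Fin m))

@[simp]
theorem insertLast_last : insertLast c σ (Fin.last m) = c := by
  simp [insertLast]

@[simp]
theorem insertLast_castSucc (k : Fin m) : insertLast c σ k.castSucc = c.succAbove (σ k) := by
  rw [insertLast, trans_apply, ← Fin.succAbove_last, finSuccEquiv'_succAbove]
  simp

theorem insertLast_injective : Function.Injective (insertLast c) := fun σ τ h =>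
  Equiv.ext fun k => Fin.succAbove_right_injective (p := c) <| by
    rw [← insertLast_castSucc, ← insertLast_castSucc, h]

theorem exists_insertLast_eq {π : Perm (Fin (m + 1))} (hπ : π (Fin.last m) = c) :
    ∃ σ, insertLast c σ = π := by
  set e := (finSuccEquiv' (Fin.last m)).symm.trans (π.trans (finSuccEquiv' c))
  have he : e none = none := by simp [e, hπ]
  refine ⟨e.removeNone, ?_⟩
  rw [insertLast, optionCongr_removeNone he]
  ext1 x
  simp [e]

end insertLast

theorem permVal_succ_self {m : ℕ} (π : Perm (Fin (m + 1))) :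
    permVal (m + 1) π m = π (Fin.last m) := by
  rw [permVal, dif_pos m.lt_succ_self]
  rfl

section descents

variable {m : ℕ} (c : Fin (m + 1)) (σ : Perm (Fin m))

theorem permVal_insertLast_of_lt {k : ℕ} (hk : k < m) :
    permVal (m + 1) (insertLast c σ) k
      = if permVal m σ k < c then permVal m σ k else permVal m σ k + 1 := by
  rw [permVal, dif_pos (hk.trans m.lt_succ_self), permVal, dif_pos hk, ← Fin.val_succAbove,
    ← insertLast_castSucc]
  rfl

theorem permVal_insertLast_self : permVal (m + 1) (insertLast c σ) m = c := by
  rw [permVal_succ_self, insertLast_last]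

theorem permVal_pred_lt (hm : 0 < m) : permVal m σ (m - 1) < m := by
  rw [permVal, dif_pos (by omega)]
  exact Fin.is_lt _

theorem self_notMem_descSet : m ∉ descSet m σ := by
  simp only [descSet, mem_filter, mem_Icc]
  omega

theorem descSet_insertLast (hm : 0 < m) :
    descSet (m + 1) (insertLast c σ)
      = if c ≤ permVal m σ (m - 1) then insert m (descSet m σ) else descSet m σ := by
  have hIcc : Icc 1 (m + 1 - 1) = insert m (Icc 1 (m - 1)) := by
    ext j
    simp only [mem_Icc, mem_insert]
    omega
  have hbelow : (Icc 1 (m - 1)).filter (fun j =>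
      permVal (m + 1) (insertLast c σ) j < permVal (m + 1) (insertLast c σ) (j - 1))
      = descSet m σ := by
    refine filter_congr fun j hj => ?_
    rw [mem_Icc] at hj
    rw [permVal_insertLast_of_lt c σ (by omega : j < m),
      permVal_insertLast_of_lt c σ (by omega : j - 1 < m)]
    split_ifs <;> omega
  rw [descSet, hIcc, filter_insert, hbelow, permVal_insertLast_self,
    permVal_insertLast_of_lt c σ (by omega : m - 1 < m)]
  split_ifs <;> first | rfl | omega

end descents

noncomputable def descMonomial (n : ℕ) (π : Perm (Fin n)) : MvPolynomial ℕ ℤ :=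
  ∏ j ∈ descSet n π, X j

theorem G_eq_sum_filter (n i : ℕ) :
    G n i = ∑ π ∈ univ.filter (fun π : Perm (Fin n) => permVal n π (n - 1) + 1 = i),
      descMonomial n π :=
  rfl

section recursion

variable {m : ℕ}

theorem descMonomial_insertLast (hm : 0 < m) (c : Fin (m + 1)) (σ : Perm (Fin m)) :
    descMonomial (m + 1) (insertLast c σ)
      = (if c ≤ permVal m σ (m - 1) then X m else 1) * descMonomial m σ := by
  rw [descMonomial, descSet_insertLast c σ hm]
  split_ifs
  · rw [prod_insert (self_notMem_descSet σ), descMonomial]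
  · rw [one_mul, descMonomial]

theorem G_succ_eq_sum (hm : 0 < m) (c : Fin (m + 1)) :
    G (m + 1) (c + 1)
      = ∑ σ : Perm (Fin m), (if c ≤ permVal m σ (m - 1) then X m else 1) * descMonomial m σ := by
  have hfilter : univ.filter (fun π : Perm (Fin (m + 1)) => permVal (m + 1) π m + 1 = c + 1)
      = univ.filter (fun π => π (Fin.last m) = c) := by
    refine filter_congr fun π _ => ?_
    rw [permVal_succ_self, add_left_inj, Fin.val_inj]
  rw [G_eq_sum_filter, Nat.add_sub_cancel, hfilter]
  refine (sum_bij (fun σ _ => insertLast c σ) (fun σ _ => ?_) (fun σ _ τ _ h => ?_)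
    (fun π hπ => ?_) (fun σ _ => ?_)).symm
  · simp
  · exact insertLast_injective c h
  · obtain ⟨σ, hσ⟩ := exists_insertLast_eq c (mem_filter.mp hπ).2
    exact ⟨σ, mem_univ σ, hσ⟩
  · exact (descMonomial_insertLast hm c σ).symm

theorem G_succ_one (hm : 0 < m) : G (m + 1) 1 = X m * ∑ j ∈ Icc 1 m, G m j := by
  have hsum := G_succ_eq_sum hm 0
  simp only [Fin.val_zero, zero_add, Nat.zero_le, if_true] at hsum
  have hmaps : ∀ σ ∈ (univ : Finset (Perm (Fin m))), permVal m σ (m - 1) + 1 ∈ Icc 1 m :=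
    fun σ _ => mem_Icc.mpr ⟨by omega, permVal_pred_lt σ hm⟩
  rw [hsum, ← mul_sum, ← sum_fiberwise_of_maps_to hmaps]
  rfl

theorem ite_le_add_one_eq {R : Type*} [Ring R] (x : R) (c v : ℕ) :
    (if c + 1 ≤ v then x else 1) = (if c ≤ v then x else 1) + if v = c then 1 - x else 0 := by
  split_ifs <;> first | omega | abel

theorem G_succ_add_two (hm : 0 < m) {c : ℕ} (hc : c < m) :
    G (m + 1) (c + 2) = G (m + 1) (c + 1) + (1 - X m) * G m (c + 1) := by
  have hlast : G m (c + 1)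
      = ∑ σ : Perm (Fin m), if permVal m σ (m - 1) = c then descMonomial m σ else 0 := by
    rw [G_eq_sum_filter, sum_filter]
    simp only [add_left_inj]
  rw [G_succ_eq_sum hm ⟨c + 1, by omega⟩, G_succ_eq_sum hm ⟨c, by omega⟩, hlast, mul_sum,
    ← sum_add_distrib]
  refine sum_congr rfl fun σ _ => ?_
  rw [Fin.val_mk, Fin.val_mk, ite_le_add_one_eq, add_mul, mul_ite, mul_zero, ite_zero_mul]

end recursion

theorem G_one_one : G 1 1 = 1 := by
  have hfilter : univ.filter (fun π : Perm (Fin 1) => permVal 1 π (1 - 1) + 1 = 1) = {1} := by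
    decide
  have hdesc : descSet 1 1 = ∅ := by decide
  rw [G, hfilter, sum_singleton, hdesc, prod_empty]

/-- Algorithm G: `G_1^{(1)} = 1`, `G_n^{(1)} = u_{n-1} ∑_{j=1}^{n-1} G_{n-1}^{(j)}`, and
`G_n^{(i)} = G_n^{(i-1)} + (1 - u_{n-1}) G_{n-1}^{(i-1)}` for `i > 1`. -/
theorem stmt_17 :
    G 1 1 = 1 ∧
    (∀ n : ℕ, 2 ≤ n →
      G n 1 = MvPolynomial.X (n - 1) * ∑ j ∈ Finset.Icc 1 (n - 1), G (n - 1) j) ∧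
    (∀ n i : ℕ, 2 ≤ n → 1 < i → i ≤ n →
      G n i = G n (i - 1) + (1 - MvPolynomial.X (n - 1)) * G (n - 1) (i - 1)) := by
  refine ⟨G_one_one, fun n hn => ?_, fun n i hn hi hin => ?_⟩
  · obtain ⟨m, rfl⟩ : ∃ m, n = m + 1 := ⟨n - 1, by omega⟩
    simpa using G_succ_one (m := m) (by omega)
  · obtain ⟨m, rfl⟩ : ∃ m, n = m + 1 := ⟨n - 1, by omega⟩
    obtain ⟨c, rfl⟩ : ∃ c, i = c + 2 := ⟨i - 2, by omega⟩
    simpa using G_succ_add_two (m := m) (by omega) (by omega : c < m)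
end

section
/- Let a_1 ≤ ... ≤ a_n be integers with a_1+...+a_j ≤ 0 for 1 ≤ j ≤ n-1 and a_1+...+a_n ≥ 1. Let A_1,...,A_n ∈ ℤ^n be given by A_j = ((a_{j+1}+...+a_n), ..., (a_{j+1}+...+a_n), -(a_1+...+a_j), ..., -(a_1+...+a_j)) with the first j coordinates equal to a_{j+1}+...+a_n and the last n-j equal to -(a_1+...+a_j), for 1 ≤ j ≤ n-1, and A_n = (1,1,...,1). Then every integer point λ of the cone {x ∈ ℝ^n : x_1 ≥ x_2 ≥ ... ≥ x_n ≥ 0 and a_1 x_1 + ... + a_n x_n ≥ 0} can be written uniquely as λ = p + ∑_{j=1}^n c_j A_j with c ∈ ℤ_{≥0}^n and p an integer point of the half-open parallelepiped ∑_{j=1}^n [0,1) A_j. -/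
/-!
The constraint matrix `C` (rows `e_i - e_{i+1}` for `i < n`, and `(a_1, …, a_n)`) satisfies
`C A_j = d e_j` with `d = a_1 + ⋯ + a_n > 0`, so `C / d` inverts the matrix with rows `A_j`.
Hence an integer point `λ` has coordinates `x = C λ / d` in the basis `(A_j)`; they are
nonnegative because the entries of `C λ` are `λ_i - λ_{i+1}` and `∑ a_i λ_i`. The decomposition
`λ = ∑ fract(x_j) A_j + ∑ ⌊x_j⌋ A_j` is the only one, and its first summand is integral because
the second is.
-/

/-- The generators `A_1, …, A_n` of the cone `K_Id`: for `1 ≤ j ≤ n-1`, the first `j`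
coordinates of `A_j` equal `a_{j+1} + ⋯ + a_n` and the last `n-j` equal
`-(a_1 + ⋯ + a_j)`; and `A_n = (1, …, 1)`. -/
def genA (n : ℕ) (a : ℕ → ℤ) (j : ℕ) : Fin n → ℤ := fun i =>
  if j = n then 1
  else if (i : ℕ) < j then ∑ k ∈ Finset.Icc (j + 1) n, a k
  else -∑ k ∈ Finset.Icc 1 j, a k

open Finset Matrix

theorem sum_Icc_succ_eq_sum_Ico {M : Type*} [AddCommMonoid M] (f : ℕ → M) (m n : ℕ) :
    ∑ k ∈ Icc (m + 1) n, f k = ∑ k ∈ Ico m n, f (k + 1) := by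
  rw [← Ico_add_one_right_eq_Icc, sum_Ico_add']

theorem sum_Icc_one_eq_sum_range {M : Type*} [AddCommMonoid M] (f : ℕ → M) (n : ℕ) :
    ∑ k ∈ Icc 1 n, f k = ∑ k ∈ range n, f (k + 1) := by
  rw [range_eq_Ico, ← sum_Icc_succ_eq_sum_Ico]

theorem sum_Icc_one_add_sum_Icc_succ {M : Type*} [AddCommMonoid M] (f : ℕ → M) {m n : ℕ}
    (h : m ≤ n) : ∑ k ∈ Icc 1 m, f k + ∑ k ∈ Icc (m + 1) n, f k = ∑ k ∈ Icc 1 n, f k := by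
  rw [sum_Icc_one_eq_sum_range, sum_Icc_one_eq_sum_range, sum_Icc_succ_eq_sum_Ico,
    sum_range_add_sum_Ico _ h]

section Parallelepiped

variable {K m : Type*} [Field K] [LinearOrder K] [IsStrictOrderedRing K] [FloorRing K]
  [Fintype m] [DecidableEq m]

theorem existsUnique_mem_parallelepiped_add_nat_vecMul {G : Matrix m m ℤ} {N : Matrix m m K}
    (hGN : G.map (Int.cast : ℤ → K) * N = 1) {l : m → ℤ}
    (hl : 0 ≤ (fun i => (l i : K)) ᵥ* N) :
    ∃! pc : (m → ℤ) × (m → ℕ),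
      (∃ t : m → K, (∀ j, 0 ≤ t j ∧ t j < 1) ∧
        ∀ i, (pc.1 i : K) = (t ᵥ* G.map (Int.cast : ℤ → K)) i) ∧
      ∀ i, l i = pc.1 i + ((fun j => (pc.2 j : ℤ)) ᵥ* G) i := by
  set G' := G.map (Int.cast : ℤ → K)
  set lK : m → K := fun i => (l i : K)
  set x := lK ᵥ* N
  have hxG : x ᵥ* G' = lK := by
    rw [vecMul_vecMul, mul_eq_one_comm.mp hGN, vecMul_one]
  have cast_vecMul (v : m → ℤ) (i : m) :
      ((v ᵥ* G) i : K) = ((fun j => (v j : K)) ᵥ* G') i :=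
    (Int.castRingHom K).map_vecMul G v i
  set c : m → ℕ := fun j => ⌊x j⌋.toNat
  have hc (j : m) : ((c j : ℤ) : K) = ⌊x j⌋ := by
    simp [c, Int.toNat_of_nonneg (Int.floor_nonneg.mpr (hl j))]
  refine ⟨(fun i => l i - ((fun j => (c j : ℤ)) ᵥ* G) i, c),
    ⟨⟨fun j => Int.fract (x j), fun j => ⟨Int.fract_nonneg _, Int.fract_lt_one _⟩,
      fun i => ?_⟩, fun i => by ring⟩, ?_⟩
  · have : (fun j => Int.fract (x j)) = x - fun j => ((c j : ℤ) : K) := by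
      ext j; rw [Pi.sub_apply, hc, Int.self_sub_floor]
    rw [this, sub_vecMul, hxG, Pi.sub_apply, ← cast_vecMul]
    push_cast; rfl
  · rintro ⟨p, c'⟩ ⟨⟨t, ht, hp⟩, hlp⟩
    have htc : t + (fun j => ((c' j : ℤ) : K)) = x := by
      have h : (t + fun j => ((c' j : ℤ) : K)) ᵥ* G' = lK := by
        ext i
        rw [add_vecMul, Pi.add_apply, ← hp i, ← cast_vecMul]
        simp only [lK, hlp i]
        push_cast
        rfl
      change _ = lK ᵥ* N
      rw [← h, vecMul_vecMul, hGN, vecMul_one]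
    have hc' : c' = c := by
      ext j
      have : ⌊x j⌋ = c' j := by
        rw [← htc, Pi.add_apply, Int.floor_add_intCast, Int.floor_eq_zero_iff.mpr (ht j),
          zero_add]
      simp [c, this]
    subst hc'
    ext i
    · exact eq_sub_of_add_eq (hlp i).symm
    · rfl

theorem existsUnique_mem_parallelepiped_add_nat_vecMul_of_mul_eq_smul_one
    {G H : Matrix m m ℤ} {d : ℤ} (hd : 0 < d) (hGH : G * H = d • 1) {l : m → ℤ} (hl : 0 ≤ l ᵥ* H) :
    ∃! pc : (m → ℤ) × (m → ℕ),
      (∃ t : m → K, (∀ j, 0 ≤ t j ∧ t j < 1) ∧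
        ∀ i, (pc.1 i : K) = (t ᵥ* G.map (Int.cast : ℤ → K)) i) ∧
      ∀ i, l i = pc.1 i + ((fun j => (pc.2 j : ℤ)) ᵥ* G) i := by
  have hGHK : G.map (Int.cast : ℤ → K) * H.map Int.cast = (d : K) • 1 := by
    ext i j
    simpa [mul_apply, one_apply] using
      congrArg (Int.cast : ℤ → K) (congrFun (congrFun hGH i) j)
  refine existsUnique_mem_parallelepiped_add_nat_vecMul
    (N := (d : K)⁻¹ • H.map (Int.cast : ℤ → K)) ?_ ?_
  · rw [Matrix.mul_smul, hGHK, smul_smul, inv_mul_cancel₀ (by exact_mod_cast hd.ne'), one_smul]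
  · intro i
    have hcast : ((l ᵥ* H) i : K) = ((fun i => (l i : K)) ᵥ* H.map Int.cast) i :=
      (Int.castRingHom K).map_vecMul H l i
    rw [vecMul_smul, Pi.smul_apply, smul_eq_mul, ← hcast]
    exact mul_nonneg (inv_nonneg.mpr (Int.cast_nonneg_iff.mpr hd.le))
      (Int.cast_nonneg_iff.mpr (hl i))

end Parallelepiped

def genMatrix (n : ℕ) (a : ℕ → ℤ) : Matrix (Fin n) (Fin n) ℤ :=
  Matrix.of fun j => genA n a ((j : ℕ) + 1)

def constraintMatrix (n : ℕ) (a : ℕ → ℤ) : Matrix (Fin n) (Fin n) ℤ :=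
  Matrix.of fun i =>
    if h : (i : ℕ) + 1 < n then Pi.single i 1 - Pi.single ⟨(i : ℕ) + 1, h⟩ 1
    else fun k => a ((k : ℕ) + 1)

section Generators

variable {n : ℕ} (a : ℕ → ℤ)

theorem genA_sub_genA_succ {j : ℕ} (hj : j < n) {i : ℕ} (hi : i + 1 < n) :
    genA n a (j + 1) ⟨i, by omega⟩ - genA n a (j + 1) ⟨i + 1, hi⟩ =
      if i = j then ∑ k ∈ Icc 1 n, a k else 0 := by
  by_cases hjn : j + 1 = n
  · simp [genA, hjn, show i ≠ j by omega]
  rcases lt_trichotomy i j with h | rfl | h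
  · simp [genA, hjn, h, h.ne, show i < j + 1 by omega]
  · simp only [genA, hjn, if_false, lt_add_one, if_true, lt_irrefl, sub_neg_eq_add]
    rw [add_comm, sum_Icc_one_add_sum_Icc_succ _ hj]
  · simp [genA, hjn, h.ne', show ¬ i < j + 1 by omega, show ¬ i < j by omega]

theorem sum_mul_genA {j : ℕ} (hj : j < n) :
    ∑ k : Fin n, a ((k : ℕ) + 1) * genA n a (j + 1) k =
      if j + 1 = n then ∑ k ∈ Icc 1 n, a k else 0 := by
  simp only [genA]
  rw [Fin.sum_univ_eq_sum_range (fun k => a (k + 1) * if j + 1 = n then 1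
    else if k < j + 1 then ∑ k ∈ Icc (j + 1 + 1) n, a k else -∑ k ∈ Icc 1 (j + 1), a k)]
  split_ifs with h
  · simp [sum_Icc_one_eq_sum_range]
  · have hP : ∑ k ∈ range (j + 1), a (k + 1) = ∑ k ∈ Icc 1 (j + 1), a k :=
      (sum_Icc_one_eq_sum_range _ _).symm
    have hT : ∑ k ∈ Ico (j + 1) n, a (k + 1) = ∑ k ∈ Icc (j + 1 + 1) n, a k :=
      (sum_Icc_succ_eq_sum_Ico _ _ _).symm
    rw [← sum_range_add_sum_Ico _ (show j + 1 ≤ n from hj)]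
    simp only [mul_ite]
    rw [sum_ite_of_true (fun k hk => mem_range.mp hk),
      sum_ite_of_false (fun k hk => not_lt.mpr (mem_Ico.mp hk).1), ← sum_mul, ← sum_mul, hP, hT]
    ring

theorem constraintMatrix_mulVec (v : Fin n → ℤ) (i : Fin n) :
    (constraintMatrix n a *ᵥ v) i =
      if h : (i : ℕ) + 1 < n then v i - v ⟨(i : ℕ) + 1, h⟩
      else ∑ k : Fin n, a ((k : ℕ) + 1) * v k := by
  simp only [mulVec, constraintMatrix, of_apply]
  split_ifs with h
  · change (Pi.single i 1 - Pi.single ⟨(i : ℕ) + 1, h⟩ 1) ⬝ᵥ v = _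
    rw [sub_dotProduct, single_dotProduct, single_dotProduct, one_mul, one_mul]
  · rfl

theorem constraintMatrix_mulVec_genA (j : Fin n) :
    constraintMatrix n a *ᵥ genA n a ((j : ℕ) + 1) = (∑ k ∈ Icc 1 n, a k) • Pi.single j 1 := by
  ext i
  rw [constraintMatrix_mulVec]
  split_ifs with hi
  · simpa [Pi.single_apply, Fin.ext_iff] using genA_sub_genA_succ a j.2 hi
  · have : i = j ↔ (j : ℕ) + 1 = n := by rw [Fin.ext_iff]; omega
    simp [sum_mul_genA a j.2, Pi.single_apply, this]

theorem genMatrix_mul_constraintMatrix_transpose :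
    genMatrix n a * (constraintMatrix n a)ᵀ = (∑ k ∈ Icc 1 n, a k) • 1 := by
  ext j i
  have := congrFun (constraintMatrix_mulVec_genA a j) i
  simp only [mulVec, dotProduct] at this
  simp [mul_apply, genMatrix, mul_comm, this, Pi.single_apply, one_apply,
    eq_comm]

theorem constraintMatrix_mulVec_nonneg {l : Fin n → ℤ}
    (hdec : ∀ (i : ℕ) (h : i + 1 < n), l ⟨i + 1, h⟩ ≤ l ⟨i, by omega⟩)
    (hcone : 0 ≤ ∑ i : Fin n, a ((i : ℕ) + 1) * l i) : 0 ≤ constraintMatrix n a *ᵥ l := by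
  intro i
  rw [Pi.zero_apply, constraintMatrix_mulVec]
  split_ifs with hi
  · exact sub_nonneg.mpr (hdec i hi)
  · exact hcone

end Generators

/-- Fundamental-parallelepiped tiling: under the stated hypotheses on `a`, every integer
point `λ` of the cone `{x : x₁ ≥ ⋯ ≥ xₙ ≥ 0, ∑ aᵢxᵢ ≥ 0}` is uniquely
`λ = p + ∑_j c_j A_j` with `c ∈ ℤ_{≥0}^n` and `p` an integer point of the half-open
parallelepiped `∑_j [0,1) A_j`. -/
theorem stmt_18 (n : ℕ) (a : ℕ → ℤ)
    (htotal : 1 ≤ ∑ i ∈ Finset.Icc 1 n, a i)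
    (l : Fin n → ℤ)
    (hdec : ∀ (i : ℕ) (h : i + 1 < n), l ⟨i + 1, h⟩ ≤ l ⟨i, by omega⟩)
    (hcone : 0 ≤ ∑ i : Fin n, a ((i : ℕ) + 1) * l i) :
    ∃! pc : (Fin n → ℤ) × (Fin n → ℕ),
      (∃ t : Fin n → ℚ, (∀ j, 0 ≤ t j ∧ t j < 1) ∧
        ∀ i, (pc.1 i : ℚ) = ∑ j : Fin n, t j * (genA n a ((j : ℕ) + 1) i : ℚ)) ∧
      ∀ i, l i = pc.1 i + ∑ j : Fin n, (pc.2 j : ℤ) * genA n a ((j : ℕ) + 1) i := by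
  have hl : 0 ≤ l ᵥ* (constraintMatrix n a)ᵀ := by
    rw [vecMul_transpose]
    exact constraintMatrix_mulVec_nonneg a hdec hcone
  exact existsUnique_mem_parallelepiped_add_nat_vecMul_of_mul_eq_smul_one (K := ℚ) htotal
    (genMatrix_mul_constraintMatrix_transpose a) hl
end

section
/- Let a_1 ≤ ... ≤ a_n be integers with a_1+...+a_j ≤ 0 for 1 ≤ j ≤ n-1 and a_1+...+a_n ≥ 1, and let A_1,...,A_n be as in the fundamental-parallelepiped decomposition of the cone K_Id = {x : x_1 ≥ ... ≥ x_n ≥ 0, ∑ a_i x_i ≥ 0}. For 1 ≤ j ≤ n-1, the generator A_j satisfies A_{j,j} > A_{j+1,j} and A_{i,k} = A_{i+1,k} for all k ≠ i. Consequently, if p ∈ K_Id ∩ ℤ^n has p_j = p_{j+1}, then for any c ∈ ℤ_{≥0}^n the point r = p + A_j + ∑_i c_i A_i satisfies r_j > r_{j+1}. -/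
theorem sum_Icc_one_eq_add {M : Type*} [AddCommMonoid M] (f : ℕ → M) {k n : ℕ} (hk : k ≤ n) :
    ∑ i ∈ Finset.Icc 1 n, f i = ∑ i ∈ Finset.Icc 1 k, f i + ∑ i ∈ Finset.Icc (k + 1) n, f i := by
  have hIcc_one (m : ℕ) : Finset.Icc 1 m = Finset.Ioc 0 m := Finset.Icc_add_one_left_eq_Ioc 0 m
  rw [hIcc_one, hIcc_one, Finset.Icc_add_one_left_eq_Ioc]
  exact (Finset.sum_Ioc_consecutive f k.zero_le hk).symm

namespace genA

variable {n : ℕ} {a : ℕ → ℤ} {k : ℕ}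

theorem eq_of_lt_iff {i i' : Fin n} (h : (i : ℕ) < k ↔ (i' : ℕ) < k) :
    genA n a k i = genA n a k i' := by
  simp only [genA, h]

theorem lt_of_lt_of_le (hk : k ≠ n) (htotal : 1 ≤ ∑ i ∈ Finset.Icc 1 n, a i) {i i' : Fin n}
    (hi : (i : ℕ) < k) (hi' : k ≤ i') : genA n a k i' < genA n a k i := by
  have hsplit := sum_Icc_one_eq_add a (show k ≤ n by omega)
  simp only [genA, hk, hi, if_false, if_true, show ¬(i' : ℕ) < k by omega]
  omega

theorem antitone (htotal : 1 ≤ ∑ i ∈ Finset.Icc 1 n, a i) : Antitone (genA n a k) := by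
  intro i i' hii'
  by_cases hk : k = n
  · simp [genA, hk]
  by_cases hswitch : (i : ℕ) < k ∧ k ≤ i'
  · exact (lt_of_lt_of_le hk htotal hswitch.1 hswitch.2).le
  · exact (eq_of_lt_iff (by grind)).ge

end genA

/-- Properties of the cone generators: for `1 ≤ j ≤ n-1`, `A_{j,j} > A_{j+1,j}` and
`A_{i,k} = A_{i+1,k}` for `k ≠ i`; consequently if `p` is an integer point of the cone
`K_Id` with `p_j = p_{j+1}`, then `r = p + A_j + ∑_i c_i A_i` satisfies `r_j > r_{j+1}`
for any `c ∈ ℤ_{≥0}^n`. (`A_{i,k}` is the `i`-th coordinate of `A_k`.) -/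
theorem stmt_19 (n : ℕ) (a : ℕ → ℤ)
    (htotal : 1 ≤ ∑ i ∈ Finset.Icc 1 n, a i) :
    (∀ (j : ℕ) (_hj1 : 1 ≤ j) (_hj2 : j ≤ n - 1),
      genA n a j ⟨j, by omega⟩ < genA n a j ⟨j - 1, by omega⟩) ∧
    (∀ (k i : ℕ) (_hk1 : 1 ≤ k) (_hk2 : k ≤ n) (_hi1 : 1 ≤ i) (_hi2 : i ≤ n - 1) (_hki : k ≠ i),
      genA n a k ⟨i - 1, by omega⟩ = genA n a k ⟨i, by omega⟩) ∧
    (∀ (j : ℕ) (_hj1 : 1 ≤ j) (_hj2 : j ≤ n - 1) (p : Fin n → ℤ),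
      (∀ (i : ℕ) (h : i + 1 < n), p ⟨i + 1, h⟩ ≤ p ⟨i, by omega⟩) →
      (∀ i, 0 ≤ p i) →
      0 ≤ ∑ i : Fin n, a ((i : ℕ) + 1) * p i →
      p ⟨j - 1, by omega⟩ = p ⟨j, by omega⟩ →
      ∀ c : Fin n → ℕ,
        p ⟨j, by omega⟩ + genA n a j ⟨j, by omega⟩ +
            ∑ i : Fin n, (c i : ℤ) * genA n a ((i : ℕ) + 1) ⟨j, by omega⟩ <
          p ⟨j - 1, by omega⟩ + genA n a j ⟨j - 1, by omega⟩ +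
            ∑ i : Fin n, (c i : ℤ) * genA n a ((i : ℕ) + 1) ⟨j - 1, by omega⟩) := by
  have hstep (j : ℕ) (hj1 : 1 ≤ j) (hjn : j < n) :
      genA n a j ⟨j, hjn⟩ < genA n a j ⟨j - 1, by omega⟩ :=
    genA.lt_of_lt_of_le (by omega) htotal (by simp only; omega) le_rfl
  refine ⟨fun j hj1 hj2 => hstep j hj1 (by omega),
    fun k i _ _ hi1 _ hki => genA.eq_of_lt_iff (by simp only; omega), ?_⟩
  intro j hj1 hj2 p _ _ _ hpj c
  rw [hpj]
  refine add_lt_add_of_lt_of_le (add_lt_add_right (hstep j hj1 (by omega)) _) ?_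
  gcongr with i
  exact genA.antitone htotal (Fin.mk_le_mk.2 (by omega))
end
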